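/- arXiv:1807.08178 — 10 statements merged into one kernel-verified Lean document; each statement's English description precedes it below -/
import Mathlib

section
/- Let X be a finite set and F a family of partial functions from X to {0,1} such that every total function f : X → {0,1} extends some member of F. If the weight w(F) = Σ_{φ∈F} 2^{-|dom(φ)|} equals exactly 1, then every total function f : X → {0,1} extends exactly one member of F. -/
open Finset

/-- The domain of a partial map `φ : X ⇀ Bool` (encoded as `X → Option Bool`). -/
def pdom {X : Type*} [Fintype X] (φ : X → Option Bool) : Finset X :=
  Finset.univ.filter (fun x => (φ x).isSome)

/-- A total function `f : X → Bool` extends the partial map `φ`. -/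
def PExtends {X : Type*} (f : X → Bool) (φ : X → Option Bool) : Prop :=
  ∀ x b, φ x = some b → f x = b

instance {X : Type*} [Fintype X] (f : X → Bool) : DecidablePred (PExtends f) :=
  fun φ => inferInstanceAs (Decidable (∀ x b, φ x = some b → f x = b))

/-- The weight of a family of partial maps: `∑ 2^{-|dom φ|}`. -/
noncomputable def weight {X : Type*} [Fintype X] (F : Finset (X → Option Bool)) : ℝ :=
  ∑ φ ∈ F, (1/2 : ℝ) ^ (pdom φ).card

/-- `F` is a 2-fold cover of the hypergraph `H`. -/
def IsCover {X : Type*} [Fintype X] (H : Finset (Finset X)) (F : Finset (X → Option Bool)) : Prop :=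
  (∀ φ ∈ F, pdom φ ∈ H) ∧
  (∀ φ ∈ F, ∀ ψ ∈ F, φ ≠ ψ → pdom φ = pdom ψ → ∀ x ∈ pdom φ, φ x ≠ ψ x)

theorem stmt_1 {X : Type*} [Fintype X] (F : Finset (X → Option Bool))
    (h : ∀ f : X → Bool, ∃ φ ∈ F, PExtends f φ)
    (hw : weight F = 1) :
    ∀ f : X → Bool, ∃! φ, φ ∈ F ∧ PExtends f φ := by
  classical
  set n := Fintype.card X with hn
  -- count of total functions extending a given φ
  have hcard : ∀ φ : X → Option Bool,
      (Finset.univ.filter (fun f : X → Bool => PExtends f φ)).card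
        = 2 ^ (n - (pdom φ).card) := by
    intro φ
    have e : {f : X → Bool // PExtends f φ} ≃ (((pdom φ)ᶜ : Finset X) → Bool) :=
      { toFun := fun f x => f.1 x
        invFun := fun g =>
          ⟨fun x => if h : x ∈ pdom φ then (φ x).get (by simpa [pdom] using h)
            else g ⟨x, by simpa using h⟩, by
              intro x b hb
              have hx : x ∈ pdom φ := by simp [pdom, hb]
              simp [hx, hb]⟩
        left_inv := by
          intro f
          ext x
          by_cases hx : x ∈ pdom φ
          · have hs : (φ x).isSome := by simpa [pdom] using hx
            obtain ⟨b, hb⟩ := Option.isSome_iff_exists.mp hs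
            simp [hx, hb, f.2 x b hb]
          · simp [hx]
        right_inv := by
          intro g
          ext ⟨x, hx⟩
          have hx' : x ∉ pdom φ := by simpa using hx
          simp [hx'] }
    have h1 : (Finset.univ.filter (fun f : X → Bool => PExtends f φ)).card
        = Fintype.card {f : X → Bool // PExtends f φ} := by
      rw [Fintype.card_subtype]
    rw [h1, Fintype.card_congr e]
    simp [Finset.card_compl, hn]
  -- weight = 1 gives the counting identity over ℕ
  have hdle : ∀ φ : X → Option Bool, (pdom φ).card ≤ n := fun φ => Finset.card_le_univ _
  have hsumR : ∑ φ ∈ F, ((2 : ℝ)) ^ (n - (pdom φ).card) = 2 ^ n := by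
    have := hw
    unfold weight at this
    have h2 : ∑ φ ∈ F, (2 : ℝ) ^ n * (1/2 : ℝ) ^ (pdom φ).card = 2 ^ n := by
      rw [← Finset.mul_sum, this, mul_one]
    rw [← h2]
    refine Finset.sum_congr rfl fun φ _ => ?_
    rw [one_div, inv_pow, ← pow_sub₀ (2 : ℝ) (by norm_num) (hdle φ)]
  have hsumN : ∑ φ ∈ F, 2 ^ (n - (pdom φ).card) = 2 ^ n := by
    have : ((∑ φ ∈ F, 2 ^ (n - (pdom φ).card) : ℕ) : ℝ) = ((2 ^ n : ℕ) : ℝ) := by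
      push_cast
      exact hsumR
    exact_mod_cast this
  -- double counting
  have hdc : ∑ f : X → Bool, (F.filter (fun φ => PExtends f φ)).card
      = ∑ φ ∈ F, (Finset.univ.filter (fun f : X → Bool => PExtends f φ)).card := by
    simp only [Finset.card_filter]
    rw [Finset.sum_comm]
  have htot : ∑ f : X → Bool, (F.filter (fun φ => PExtends f φ)).card = 2 ^ n := by
    rw [hdc]
    rw [Finset.sum_congr rfl fun φ _ => hcard φ]
    exact hsumN
  -- each f is covered at least once
  have hge : ∀ f : X → Bool, 1 ≤ (F.filter (fun φ => PExtends f φ)).card := by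
    intro f
    obtain ⟨φ, hφF, hφ⟩ := h f
    exact Finset.card_pos.mpr ⟨φ, Finset.mem_filter.mpr ⟨hφF, hφ⟩⟩
  have hcards : Fintype.card (X → Bool) = 2 ^ n := by
    simp [Fintype.card_fun, hn]
  have hone : ∀ f : X → Bool, (F.filter (fun φ => PExtends f φ)).card = 1 := by
    have hsum1 : ∑ _f : X → Bool, 1 = 2 ^ n := by
      simp [Finset.card_univ, hcards]
    have heq : ∑ _f : X → Bool, 1
        = ∑ f : X → Bool, (F.filter (fun φ => PExtends f φ)).card := by
      rw [htot, hsum1]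
    have := (Finset.sum_eq_sum_iff_of_le (fun f _ => hge f)).mp heq
    intro f
    exact (this f (Finset.mem_univ f)).symm
  intro f
  obtain ⟨φ, hφ⟩ := Finset.card_eq_one.mp (hone f)
  refine ⟨φ, ?_, ?_⟩
  · have : φ ∈ F.filter (fun φ => PExtends f φ) := by rw [hφ]; exact Finset.mem_singleton_self φ
    exact Finset.mem_filter.mp this
  · intro ψ ⟨hψF, hψ⟩
    have : ψ ∈ F.filter (fun φ => PExtends f φ) := Finset.mem_filter.mpr ⟨hψF, hψ⟩
    rw [hφ] at this
    exact Finset.mem_singleton.mp this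
end

section
/- Let X be a finite set and F a family of partial functions from X to {0,1} with weight w(F) = 1 such that every total function f : X → {0,1} extends some member of F. Then for every nonempty S ⊆ X, the weight of F_S^0 equals the weight of F_S^1, where F_S^i = {φ ∈ F : dom(φ) ⊇ S and Σ_{x∈S} φ(x) ≡ i (mod 2)}. -/
open Finset

/-!
Compare Fourier coefficients on the cube `X → Bool`. With `χ_S f = (-1)^{∑_{x∈S} f x}`,
summing `χ_S` over the subcube of total extensions of `φ` gives `2^n · 2^{-|dom φ|} · χ_S(φ)`
when `S ⊆ dom φ` and `0` otherwise. Comparing total counts, `w(F) = 1` together with the covering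
property says that these subcubes partition the cube, so summing over `F` gives `∑_f χ_S f`,
which vanishes for `S ≠ ∅`. Hence the weights of the `φ` with `χ_S(φ) = 1` and `χ_S(φ) = -1`
agree.
-/

lemma mem_pdom {X : Type*} [Fintype X] {φ : X → Option Bool} {x : X} :
    x ∈ pdom φ ↔ (φ x).isSome := by
  simp [pdom]

lemma pExtends_iff_forall_ne {X : Type*} {f : X → Bool} {φ : X → Option Bool} :
    PExtends f φ ↔ ∀ x, φ x ≠ some !(f x) := by
  refine ⟨fun hf x hx => by simpa using hf x _ hx, fun hf x b hb => ?_⟩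
  by_contra hne
  exact hf x (hb ▸ congrArg some (Bool.eq_not_iff.mpr (Ne.symm hne)))

section ParityCharacter

variable {X : Type*}

noncomputable def parityChar (S : Finset X) (f : X → Bool) : ℝ :=
  (-1) ^ ∑ x ∈ S, (f x).toNat

@[simp]
lemma parityChar_empty (f : X → Bool) : parityChar ∅ f = 1 := by
  simp [parityChar]

lemma parityChar_eq_ite (S : Finset X) (f : X → Bool) :
    parityChar S f = if (∑ x ∈ S, (f x).toNat) % 2 = 0 then 1 else -1 := by
  rcases Nat.even_or_odd (∑ x ∈ S, (f x).toNat) with he | ho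
  · rw [parityChar, he.neg_one_pow, if_pos (Nat.even_iff.mp he)]
  · rw [parityChar, ho.neg_one_pow, if_neg (by simp [Nat.odd_iff.mp ho])]

end ParityCharacter

section Subcube

variable {X : Type*} [Fintype X] [DecidableEq X]

/-- The contribution of the coordinate `x` to `𝟙[f extends φ] · χ_S f`, as a function of `f x`. -/
noncomputable def extendsCharFactor (S : Finset X) (φ : X → Option Bool) (x : X) (b : Bool) : ℝ :=
  (if φ x ≠ some !b then 1 else 0) * (if x ∈ S then (-1) ^ b.toNat else 1)

lemma ite_extends_mul_parityChar (S : Finset X) (φ : X → Option Bool)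
    (f : X → Bool) :
    (if PExtends f φ then 1 else 0) * parityChar S f = ∏ x, extendsCharFactor S φ x (f x) := by
  simp only [extendsCharFactor, prod_mul_distrib, Fintype.prod_boole, Fintype.prod_ite_mem,
    prod_pow_eq_pow_sum, pExtends_iff_forall_ne, parityChar]

lemma sum_extendsCharFactor (S : Finset X) (φ : X → Option Bool) (x : X) :
    ∑ b, extendsCharFactor S φ x b =
      2 * (if x ∈ S then (if x ∈ pdom φ then (-1) ^ ((φ x).getD false).toNat else 0) else 1) *
        (if x ∈ pdom φ then 1 / 2 else 1) := by
  rw [Fintype.sum_bool]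
  by_cases hS : x ∈ S <;> rcases hφ : φ x with _ | (_ | _) <;>
    simp [extendsCharFactor, mem_pdom, hS, hφ]; norm_num

/-- The `S`-th Fourier coefficient of the indicator of the subcube of extensions of `φ`. -/
noncomputable def signedWeight (S : Finset X) (φ : X → Option Bool) : ℝ :=
  if S ⊆ pdom φ then parityChar S (fun x => (φ x).getD false) * (1 / 2) ^ (pdom φ).card else 0

theorem sum_ite_extends_mul_parityChar (S : Finset X) (φ : X → Option Bool) :
    ∑ f : X → Bool, (if PExtends f φ then 1 else 0) * parityChar S f =
      2 ^ Fintype.card X * signedWeight S φ := by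
  simp_rw [ite_extends_mul_parityChar, ← Fintype.prod_sum, sum_extendsCharFactor,
    prod_mul_distrib, prod_const, card_univ, Fintype.prod_ite_mem, prod_ite_zero, prod_const,
    prod_pow_eq_pow_sum, signedWeight, parityChar, ← subset_iff]
  split_ifs
  · ring
  · simp

theorem sum_ite_extends (φ : X → Option Bool) :
    ∑ f : X → Bool, (if PExtends f φ then (1 : ℝ) else 0) =
      2 ^ Fintype.card X * (1 / 2) ^ (pdom φ).card := by
  simpa [signedWeight] using sum_ite_extends_mul_parityChar ∅ φ

theorem sum_parityChar_eq_zero {S : Finset X} (hS : S.Nonempty) :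
    ∑ f : X → Bool, parityChar S f = 0 := by
  have hnone : ¬ S ⊆ pdom (fun _ : X => none) := by
    simpa [pdom] using hS.ne_empty
  simpa [PExtends, signedWeight, hnone] using
    sum_ite_extends_mul_parityChar S (fun _ : X => none)

end Subcube

section Family

variable {X : Type*} [Fintype X] [DecidableEq X] {F : Finset (X → Option Bool)}

theorem sum_ite_extends_eq_one (h : ∀ f : X → Bool, ∃ φ ∈ F, PExtends f φ) (hw : weight F = 1)
    (f : X → Bool) : ∑ φ ∈ F, (if PExtends f φ then (1 : ℝ) else 0) = 1 := by
  have hle : ∀ g ∈ (univ : Finset (X → Bool)),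
      (1 : ℝ) ≤ ∑ φ ∈ F, if PExtends g φ then 1 else 0 := by
    intro g _
    obtain ⟨φ, hφF, hφ⟩ := h g
    calc (1 : ℝ) = if PExtends g φ then 1 else 0 := (if_pos hφ).symm
      _ ≤ _ := single_le_sum (f := fun φ => if PExtends g φ then (1 : ℝ) else 0)
          (fun _ _ => by positivity) hφF
  have htotal : ∑ _g : X → Bool, (1 : ℝ) = ∑ g, ∑ φ ∈ F, if PExtends g φ then 1 else 0 := by
    rw [sum_comm, sum_congr rfl fun φ _ => sum_ite_extends φ, ← mul_sum, ← weight, hw]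
    simp
  exact ((sum_eq_sum_iff_of_le hle).mp htotal f (mem_univ f)).symm

theorem sum_signedWeight_eq_weight_sub (S : Finset X) :
    ∑ φ ∈ F, signedWeight S φ =
      weight (F.filter (fun φ => S ⊆ pdom φ ∧ (∑ x ∈ S, ((φ x).getD false).toNat) % 2 = 0)) -
      weight (F.filter (fun φ => S ⊆ pdom φ ∧ (∑ x ∈ S, ((φ x).getD false).toNat) % 2 = 1)) := by
  rw [weight, weight, sum_filter, sum_filter, ← sum_sub_distrib]
  refine sum_congr rfl fun φ _ => ?_
  rw [signedWeight, parityChar_eq_ite]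
  split_ifs <;> simp_all

end Family

theorem stmt_3 {X : Type*} [Fintype X] [DecidableEq X]
    (F : Finset (X → Option Bool))
    (h : ∀ f : X → Bool, ∃ φ ∈ F, PExtends f φ)
    (hw : weight F = 1)
    (S : Finset X) (hS : S.Nonempty) :
    weight (F.filter (fun φ => S ⊆ pdom φ ∧ (∑ x ∈ S, ((φ x).getD false).toNat) % 2 = 0)) =
    weight (F.filter (fun φ => S ⊆ pdom φ ∧ (∑ x ∈ S, ((φ x).getD false).toNat) % 2 = 1)) := by
  have hcoeff : 2 ^ Fintype.card X * ∑ φ ∈ F, signedWeight S φ = 0 := by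
    calc 2 ^ Fintype.card X * ∑ φ ∈ F, signedWeight S φ
        = ∑ φ ∈ F, ∑ f : X → Bool, (if PExtends f φ then 1 else 0) * parityChar S f := by
          simp only [mul_sum, sum_ite_extends_mul_parityChar]
      _ = ∑ f : X → Bool, (∑ φ ∈ F, if PExtends f φ then 1 else 0) * parityChar S f := by
          rw [sum_comm]
          simp only [sum_mul]
      _ = ∑ f : X → Bool, parityChar S f := by
          simp only [sum_ite_extends_eq_one h hw, one_mul]
      _ = 0 := sum_parityChar_eq_zero hS
  rw [sum_signedWeight_eq_weight_sub] at hcoeff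
  exact sub_eq_zero.mp ((mul_eq_zero.mp hcoeff).resolve_left (by positivity))
end

section
/- For every r ≥ 2, any unary r-uniform family F of partial functions from a finite set X to {0,1} such that every total function f : X → {0,1} extends some member of F has |F| ≥ 2^r + 1. (That is, m̃'_2(r) ≥ 2^r + 1.) -/
open Finset

/-!
If every `f : X → Bool` extends a member of `F`, then `∑ f, w f ≤ ∑ φ ∈ F, ∑ f ⊇ φ, w f` for
every nonnegative weight `w` on the cube. Fix `φ₀ ∈ F` and let `χ f = ±1` be the parity of the
number of points of `dom φ₀` at which `f` disagrees with `φ₀`; take `w = 1 - χ`. Flipping a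
coordinate of `dom φ₀` outside `dom φ` shows that `χ` sums to zero over the whole cube and over
the extensions of every `φ` with `dom φ₀ ⊄ dom φ`, which by uniformity and unarity is every
`φ ∈ F` other than `φ₀`; and `w` vanishes on the extensions of `φ₀`. With `n = |X|` this gives
`2 ^ n ≤ (|F| - 1) * 2 ^ (n - r)`.
-/

section

variable {X : Type*} [Fintype X]

def agreementSign (φ : X → Option Bool) (f : X → Bool) : ℤ :=
  ∏ x ∈ pdom φ, if φ x = some (f x) then 1 else -1

lemma abs_agreementSign (φ : X → Option Bool) (f : X → Bool) : |agreementSign φ f| = 1 := by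
  rw [agreementSign, abs_prod]
  exact prod_eq_one fun x _ => by split_ifs <;> simp

lemma agreementSign_eq_one {φ : X → Option Bool} {f : X → Bool} (hf : PExtends f φ) :
    agreementSign φ f = 1 :=
  prod_eq_one fun x hx => by
    obtain ⟨b, hb⟩ := Option.isSome_iff_exists.1 (mem_filter.1 hx).2
    simp [hb, hf x b hb]

variable [DecidableEq X]

def extensions (φ : X → Option Bool) : Finset (X → Bool) :=
  univ.filter (PExtends · φ)

lemma mem_extensions {φ : X → Option Bool} {f : X → Bool} :
    f ∈ extensions φ ↔ PExtends f φ := by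
  simp [extensions]

lemma extensions_eq_piFinset (φ : X → Option Bool) :
    extensions φ = Fintype.piFinset fun x => (φ x).elim univ singleton := by
  ext f
  simp only [mem_extensions, Fintype.mem_piFinset, PExtends]
  refine forall_congr' fun x => ?_
  cases φ x with
  | none => simp
  | some b => simp only [Option.elim_some, mem_singleton, Option.some.injEq]; grind

lemma card_extensions (φ : X → Option Bool) :
    #(extensions φ) = 2 ^ (Fintype.card X - #(pdom φ)) := by
  rw [extensions_eq_piFinset, Fintype.card_piFinset, ← prod_filter_mul_prod_filter_not univ
    fun x => (φ x).isSome]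
  have hsome : ∀ x ∈ univ.filter fun x => (φ x).isSome, #((φ x).elim univ singleton) = 1 := by
    intro x hx
    obtain ⟨b, hb⟩ := Option.isSome_iff_exists.1 (mem_filter.1 hx).2
    simp [hb]
  have hnone : ∀ x ∈ univ.filter fun x => ¬ (φ x).isSome, #((φ x).elim univ singleton) = 2 := by
    intro x hx
    simp_all
  rw [prod_congr rfl hsome, prod_congr rfl hnone, prod_const_one, one_mul, prod_const, pdom,
    ← card_univ, ← card_filter_add_card_filter_not (s := univ) fun x => (φ x).isSome,
    Nat.add_sub_cancel_left]

lemma agreementSign_update_not {φ : X → Option Bool} {x₀ : X} (hx₀ : x₀ ∈ pdom φ)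
    (f : X → Bool) :
    agreementSign φ (Function.update f x₀ (!f x₀)) = -agreementSign φ f := by
  obtain ⟨b, hb⟩ := Option.isSome_iff_exists.1 (mem_filter.1 hx₀).2
  rw [agreementSign, agreementSign, ← mul_prod_erase _ _ hx₀, ← mul_prod_erase _ _ hx₀,
    prod_congr rfl fun x hx => by rw [Function.update_of_ne (ne_of_mem_erase hx)],
    Function.update_self, hb]
  cases f x₀ <;> cases b <;> simp

lemma sum_agreementSign_eq_zero {φ : X → Option Bool} {x₀ : X} (hx₀ : x₀ ∈ pdom φ)
    {s : Finset (X → Bool)} (hs : ∀ f ∈ s, Function.update f x₀ (!f x₀) ∈ s) :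
    ∑ f ∈ s, agreementSign φ f = 0 :=
  sum_involution (fun f _ => Function.update f x₀ (!f x₀))
    (fun f _ => by rw [agreementSign_update_not hx₀, add_neg_cancel])
    (fun f _ _ hf => by simpa using congrFun hf x₀) hs
    (fun f _ => by simp)

lemma update_not_mem_extensions {ψ : X → Option Bool} {x₀ : X} (hx₀ : x₀ ∉ pdom ψ)
    {f : X → Bool} (hf : f ∈ extensions ψ) : Function.update f x₀ (!f x₀) ∈ extensions ψ := by
  rw [mem_extensions] at hf ⊢
  intro x b hb
  have hx : x ≠ x₀ := by rintro rfl; simp [pdom, hb] at hx₀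
  rw [Function.update_of_ne hx, hf x b hb]

lemma sum_extensions_agreementSign_eq_zero {φ ψ : X → Option Bool} (h : ¬pdom φ ⊆ pdom ψ) :
    ∑ f ∈ extensions ψ, agreementSign φ f = 0 := by
  obtain ⟨x₀, hφ, hψ⟩ := not_subset.1 h
  exact sum_agreementSign_eq_zero hφ fun f => update_not_mem_extensions hψ

lemma sum_le_sum_sum_extensions {M : Type*} [AddCommMonoid M] [PartialOrder M]
    [IsOrderedAddMonoid M] {F : Finset (X → Option Bool)} (hF : ∀ f, ∃ φ ∈ F, PExtends f φ)
    {w : (X → Bool) → M} (hw : ∀ f, 0 ≤ w f) :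
    ∑ f, w f ≤ ∑ φ ∈ F, ∑ f ∈ extensions φ, w f := by
  simp only [extensions, sum_filter]
  rw [sum_comm]
  refine sum_le_sum fun f _ => ?_
  obtain ⟨φ, hφ, hfφ⟩ := hF f
  calc w f = if PExtends f φ then w f else 0 := (if_pos hfφ).symm
    _ ≤ ∑ ψ ∈ F, if PExtends f ψ then w f else 0 :=
      single_le_sum (f := fun ψ => if PExtends f ψ then w f else 0)
        (fun ψ _ => by split_ifs <;> simp [hw]) hφ

end

theorem stmt_5 (r : ℕ) (hr : 2 ≤ r) {X : Type*} [Fintype X]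
    (F : Finset (X → Option Bool))
    (huniform : ∀ φ ∈ F, (pdom φ).card = r)
    (hunary : ∀ φ ∈ F, ∀ ψ ∈ F, pdom φ = pdom ψ → φ = ψ)
    (h : ∀ f : X → Bool, ∃ φ ∈ F, PExtends f φ) :
    2 ^ r + 1 ≤ F.card := by
  classical
  obtain ⟨φ₀, hφ₀, -⟩ := h fun _ => false
  obtain ⟨x₀, hx₀⟩ : (pdom φ₀).Nonempty := card_pos.1 (by rw [huniform φ₀ hφ₀]; omega)
  have hrn : r ≤ Fintype.card X := huniform φ₀ hφ₀ ▸ card_le_univ _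
  let w : (X → Bool) → ℤ := fun f => 1 - agreementSign φ₀ f
  have hcube : ∑ f, w f = 2 ^ Fintype.card X := by
    simp [w, sum_sub_distrib, sum_agreementSign_eq_zero hx₀ fun f _ => mem_univ _]
  have hself : ∑ f ∈ extensions φ₀, w f = 0 :=
    sum_eq_zero fun f hf => by simp [w, agreementSign_eq_one (mem_extensions.1 hf)]
  have hother : ∀ ψ ∈ F.erase φ₀, ∑ f ∈ extensions ψ, w f = 2 ^ (Fintype.card X - r) := by
    intro ψ hψ
    obtain ⟨hne, hψF⟩ := mem_erase.1 hψ
    have hnsub : ¬pdom φ₀ ⊆ pdom ψ := fun hsub => hne <| hunary ψ hψF φ₀ hφ₀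
      (eq_of_subset_of_card_le hsub (by rw [huniform ψ hψF, huniform φ₀ hφ₀])).symm
    simp [w, sum_sub_distrib, sum_extensions_agreementSign_eq_zero hnsub, card_extensions,
      huniform ψ hψF]
  have hcover := sum_le_sum_sum_extensions h (w := w) fun f =>
    sub_nonneg.2 ((le_abs_self _).trans (abs_agreementSign φ₀ f).le)
  rw [hcube, ← add_sum_erase F _ hφ₀, hself, sum_congr rfl hother, zero_add, sum_const,
    nsmul_eq_mul] at hcover
  have hrest : 2 ^ r ≤ #(F.erase φ₀) := by
    refine Nat.le_of_mul_le_mul_right (c := 2 ^ (Fintype.card X - r)) ?_ (by positivity)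
    rw [← pow_add, Nat.add_sub_cancel' hrn]
    exact_mod_cast hcover
  rw [← card_erase_add_one hφ₀]
  omega
end

section
/- Let r be a positive even integer, let X be a finite set, let H be an r-uniform hypergraph on X, and let F be a 2-fold cover of H (a family of partial functions from X to {0,1} whose domains all belong to H, such that any two distinct members with equal domains are disjoint as sets of pairs). If every total function f : X → {0,1} extends some member of F, then |H| ≥ 2^{r−1} + 1. -/
open Finset

instance pext_dec {X : Type*} [Fintype X] (φ : X → Option Bool) :
    DecidablePred (fun f : X → Bool => PExtends f φ) :=
  fun f => inferInstanceAs (Decidable (∀ x b, φ x = some b → f x = b))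

lemma sum_sgn_zero {X : Type*} [Fintype X] [DecidableEq X] (e : Finset X) (x₀ : X)
    (hx : x₀ ∈ e) (s : Finset (X → Bool))
    (hs : ∀ f ∈ s, Function.update f x₀ (!f x₀) ∈ s) :
    ∑ f ∈ s, ∏ x ∈ e, (if f x then (-1 : ℤ) else 1) = 0 := by
  refine Finset.sum_involution (fun f _ => Function.update f x₀ (!f x₀)) ?_ ?_
    (fun f _ => hs f ‹_›) ?_
  · intro f hf
    have key : ∏ x ∈ e, (if Function.update f x₀ (!f x₀) x then (-1 : ℤ) else 1)
        = - ∏ x ∈ e, (if f x then (-1 : ℤ) else 1) := by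
      rw [← Finset.mul_prod_erase e _ hx, ← Finset.mul_prod_erase e
        (fun x => if f x then (-1 : ℤ) else 1) hx]
      have h1 : ∏ x ∈ e.erase x₀, (if Function.update f x₀ (!f x₀) x then (-1 : ℤ) else 1)
          = ∏ x ∈ e.erase x₀, (if f x then (-1 : ℤ) else 1) := by
        apply Finset.prod_congr rfl
        intro x hxe
        rw [Function.update_of_ne (Finset.ne_of_mem_erase hxe)]
      rw [h1, Function.update_self]
      cases hb : f x₀ <;> simp
    rw [key]; ring
  · intro f hf _
    intro hcontra
    have := congrFun hcontra x₀
    simp only [Function.update_self] at this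
    cases hb : f x₀ <;> rw [hb] at this <;> simp at this
  · intro f hf
    funext x
    by_cases hxx : x = x₀
    · subst hxx; simp [Function.update_self]
    · simp [Function.update_of_ne hxx]

lemma ext_card {X : Type*} [Fintype X] [DecidableEq X] (φ : X → Option Bool) :
    (univ.filter (fun f : X → Bool => PExtends f φ)).card
      = 2 ^ (Fintype.card X - (pdom φ).card) := by
  have hset : univ.filter (fun f : X → Bool => PExtends f φ)
      = Fintype.piFinset (fun x => if x ∈ pdom φ then {(φ x).getD true} else Finset.univ) := by
    ext f
    simp only [Finset.mem_filter, Finset.mem_univ, true_and, Fintype.mem_piFinset]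
    constructor
    · intro hext x
      by_cases hx : x ∈ pdom φ
      · simp only [hx, if_pos]
        have : (φ x).isSome := (Finset.mem_filter.mp hx).2
        obtain ⟨b, hb⟩ := Option.isSome_iff_exists.mp this
        simp [hb, hext x b hb]
      · simp [hx]
    · intro hmem x b hb
      have hx : x ∈ pdom φ := by
        simp [pdom, hb]
      have := hmem x
      rw [if_pos hx] at this
      simpa [hb] using this
  rw [hset, Fintype.card_piFinset]
  have : ∀ x : X, (if x ∈ pdom φ then ({(φ x).getD true} : Finset Bool) else Finset.univ).card
      = if x ∈ pdom φ then 1 else 2 := by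
    intro x; split <;> simp
  simp_rw [this]
  rw [Finset.prod_ite, Finset.prod_const, Finset.prod_const, one_pow, one_mul]
  congr 1
  rw [← Finset.card_compl (pdom φ)]
  congr 1
  ext x; simp

theorem stmt_6 (r : ℕ) (hr : 0 < r) (hreven : Even r) {X : Type*} [Fintype X]
    (H : Finset (Finset X)) (huniform : ∀ e ∈ H, e.card = r)
    (F : Finset (X → Option Bool)) (hcov : IsCover H F)
    (h : ∀ f : X → Bool, ∃ φ ∈ F, PExtends f φ) :
    2 ^ (r - 1) + 1 ≤ H.card := by
  classical
  by_contra hlt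
  push_neg at hlt
  have hH : H.card ≤ 2 ^ (r - 1) := by omega
  set n := Fintype.card X with hn
  -- pick a base member
  obtain ⟨φ₀, hφ₀F, hφ₀ext⟩ := h (fun _ => true)
  set e₀ := pdom φ₀ with he₀
  have he₀H : e₀ ∈ H := hcov.1 _ hφ₀F
  have he₀card : e₀.card = r := huniform _ he₀H
  have hrn : r ≤ n := he₀card ▸ Finset.card_le_univ e₀
  -- fibers have size ≤ 2
  have hfiber : ∀ e ∈ H, (F.filter (fun φ => pdom φ = e)).card ≤ 2 := by
    intro e he
    by_contra hgt
    push_neg at hgt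
    obtain ⟨a, b, c, ha, hb, hc, hab, hac, hbc⟩ := Finset.two_lt_card_iff.mp hgt
    obtain ⟨haF, hae⟩ := Finset.mem_filter.mp ha
    obtain ⟨hbF, hbe⟩ := Finset.mem_filter.mp hb
    obtain ⟨hcF, hce⟩ := Finset.mem_filter.mp hc
    have hene : e.Nonempty := by
      rw [← Finset.card_pos, huniform e he]; exact hr
    obtain ⟨x, hxe⟩ := hene
    have h1 : a x ≠ b x := hcov.2 a haF b hbF hab (hae.trans hbe.symm) x (hae ▸ hxe)
    have h2 : a x ≠ c x := hcov.2 a haF c hcF hac (hae.trans hce.symm) x (hae ▸ hxe)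
    have h3 : b x ≠ c x := hcov.2 b hbF c hcF hbc (hbe.trans hce.symm) x (hbe ▸ hxe)
    have hsa : (a x).isSome := (Finset.mem_filter.mp (hae ▸ hxe : x ∈ pdom a)).2
    have hsb : (b x).isSome := (Finset.mem_filter.mp (hbe ▸ hxe : x ∈ pdom b)).2
    have hsc : (c x).isSome := (Finset.mem_filter.mp (hce ▸ hxe : x ∈ pdom c)).2
    obtain ⟨ba, hba⟩ := Option.isSome_iff_exists.mp hsa
    obtain ⟨bb, hbb⟩ := Option.isSome_iff_exists.mp hsb
    obtain ⟨bc, hbc'⟩ := Option.isSome_iff_exists.mp hsc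
    rcases ba <;> rcases bb <;> rcases bc <;> simp_all
  -- |F| ≤ 2^r
  have hFcard : F.card ≤ 2 ^ r := by
    have := Finset.card_eq_sum_card_fiberwise (fun φ hφ => hcov.1 φ hφ)
    calc F.card = ∑ e ∈ H, (F.filter (fun φ => pdom φ = e)).card := this
      _ ≤ ∑ _e ∈ H, 2 := Finset.sum_le_sum hfiber
      _ = 2 * H.card := by rw [Finset.sum_const]; ring
      _ ≤ 2 * 2 ^ (r - 1) := by omega
      _ = 2 ^ r := by rw [← pow_succ']; congr 1; omega
  have hcardfun : Fintype.card (X → Bool) = 2 ^ n := by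
    simp [hn]
  -- double counting
  have hdouble : ∑ f : X → Bool, (F.filter (fun φ => PExtends f φ)).card
      = ∑ φ ∈ F, (univ.filter (fun f : X → Bool => PExtends f φ)).card := by
    simp_rw [Finset.card_filter]
    exact Finset.sum_comm
  have hext2 : ∀ φ ∈ F, (univ.filter (fun f : X → Bool => PExtends f φ)).card = 2 ^ (n - r) := by
    intro φ hφ
    rw [ext_card, huniform _ (hcov.1 φ hφ)]
  have hsum_le : ∑ f : X → Bool, (F.filter (fun φ => PExtends f φ)).card ≤ 2 ^ n := by
    rw [hdouble, Finset.sum_congr rfl hext2, Finset.sum_const, smul_eq_mul]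
    calc F.card * 2 ^ (n - r) ≤ 2 ^ r * 2 ^ (n - r) := by
          exact Nat.mul_le_mul_right _ hFcard
      _ = 2 ^ n := by rw [← pow_add]; congr 1; omega
  have hc1 : ∀ f : X → Bool, 1 ≤ (F.filter (fun φ => PExtends f φ)).card := by
    intro f
    obtain ⟨φ, hφF, hφe⟩ := h f
    exact Finset.card_pos.mpr ⟨φ, Finset.mem_filter.mpr ⟨hφF, hφe⟩⟩
  -- exact cover
  have hexact : ∀ f : X → Bool, (F.filter (fun φ => PExtends f φ)).card = 1 := by
    by_contra hcon
    push_neg at hcon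
    obtain ⟨f₀, hf₀⟩ := hcon
    have hlt' : ∑ _f : X → Bool, 1 < ∑ f : X → Bool, (F.filter (fun φ => PExtends f φ)).card := by
      apply Finset.sum_lt_sum (fun f _ => hc1 f)
      exact ⟨f₀, Finset.mem_univ _, lt_of_le_of_ne (hc1 f₀) (Ne.symm hf₀)⟩
    rw [Finset.sum_const, smul_eq_mul, mul_one, Finset.card_univ, hcardfun] at hlt'
    omega
  -- the signed sum
  set sg : (X → Bool) → ℤ := fun f => ∏ x ∈ e₀, (if f x then (-1 : ℤ) else 1) with hsg
  have he₀ne : e₀.Nonempty := by rw [← Finset.card_pos, he₀card]; exact hr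
  obtain ⟨y₀, hy₀⟩ := he₀ne
  have hT0 : ∑ f : X → Bool, sg f = 0 :=
    sum_sgn_zero e₀ y₀ hy₀ univ (fun f _ => Finset.mem_univ _)
  -- decomposition
  have hTdec : ∑ f : X → Bool, sg f
      = ∑ φ ∈ F, ∑ f ∈ univ.filter (fun f : X → Bool => PExtends f φ), sg f := by
    simp_rw [Finset.sum_filter]
    rw [Finset.sum_comm]
    apply Finset.sum_congr rfl
    intro f _
    rw [← Finset.sum_filter, Finset.sum_const, hexact f, one_smul]
  -- terms with pdom φ ≠ e₀ vanish
  have hvanish : ∀ φ ∈ F, pdom φ ≠ e₀ →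
      ∑ f ∈ univ.filter (fun f : X → Bool => PExtends f φ), sg f = 0 := by
    intro φ hφ hne
    have hcards : (pdom φ).card = e₀.card := by
      rw [huniform _ (hcov.1 φ hφ), he₀card]
    have hnsub : ¬ e₀ ⊆ pdom φ := by
      intro hsub
      exact hne (Finset.eq_of_subset_of_card_le hsub (le_of_eq hcards)).symm
    obtain ⟨x₀, hx₀e, hx₀d⟩ := Finset.not_subset.mp hnsub
    apply sum_sgn_zero e₀ x₀ hx₀e
    intro f hf
    rw [Finset.mem_filter] at hf ⊢
    refine ⟨Finset.mem_univ _, ?_⟩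
    intro x b hb
    have hxd : x ∈ pdom φ := by simp [pdom, hb]
    have hxx : x ≠ x₀ := fun hxx => hx₀d (hxx ▸ hxd)
    rw [Function.update_of_ne hxx]
    exact hf.2 x b hb
  -- value on the fiber of e₀
  set eps : (X → Option Bool) → ℤ := fun φ => ∏ x ∈ e₀, (if (φ x).getD true then (-1 : ℤ) else 1)
    with heps
  have hfibval : ∀ φ ∈ F, pdom φ = e₀ →
      ∑ f ∈ univ.filter (fun f : X → Bool => PExtends f φ), sg f
        = (2 ^ (n - r) : ℕ) * eps φ := by
    intro φ hφ hdom
    have : ∀ f ∈ univ.filter (fun f : X → Bool => PExtends f φ), sg f = eps φ := by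
      intro f hf
      rw [Finset.mem_filter] at hf
      apply Finset.prod_congr rfl
      intro x hxe
      have hxd : x ∈ pdom φ := hdom ▸ hxe
      have hs : (φ x).isSome := (Finset.mem_filter.mp hxd).2
      obtain ⟨b, hb⟩ := Option.isSome_iff_exists.mp hs
      rw [hf.2 x b hb, hb]
      rfl
    rw [Finset.sum_congr rfl this, Finset.sum_const, hext2 φ hφ, nsmul_eq_mul]
  -- eps is constant on the fiber
  have hepsconst : ∀ φ ∈ F, pdom φ = e₀ → eps φ = eps φ₀ := by
    intro φ hφ hdom
    by_cases hφeq : φ = φ₀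
    · rw [hφeq]
    · have hkey : ∀ x ∈ e₀, (φ x).getD true = !((φ₀ x).getD true) := by
        intro x hxe
        have hne := hcov.2 φ₀ hφ₀F φ hφ (Ne.symm hφeq) (he₀.symm.trans hdom.symm) x (he₀ ▸ hxe)
        have hs : (φ x).isSome := (Finset.mem_filter.mp (hdom ▸ hxe : x ∈ pdom φ)).2
        have hs₀ : (φ₀ x).isSome := (Finset.mem_filter.mp (he₀ ▸ hxe : x ∈ e₀)).2
        obtain ⟨b, hb⟩ := Option.isSome_iff_exists.mp hs
        obtain ⟨b₀, hb₀⟩ := Option.isSome_iff_exists.mp hs₀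
        rw [hb, hb₀]
        rw [hb, hb₀] at hne
        simp only [Option.getD_some]
        rcases b <;> rcases b₀ <;> simp_all
      have : eps φ = ∏ x ∈ e₀, -(if (φ₀ x).getD true then (-1 : ℤ) else 1) := by
        apply Finset.prod_congr rfl
        intro x hxe
        rw [hkey x hxe]
        rcases hb : (φ₀ x).getD true <;> simp
      rw [this]
      have hneg : ∏ x ∈ e₀, -(if (φ₀ x).getD true then (-1 : ℤ) else 1)
          = (-1 : ℤ) ^ e₀.card * eps φ₀ := by
        rw [heps]
        rw [Finset.prod_congr rfl (fun x _ =>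
          (neg_one_mul (if (φ₀ x).getD true then (-1 : ℤ) else 1)).symm)]
        rw [Finset.prod_mul_distrib, Finset.prod_const]
      have hone : ((-1 : ℤ)) ^ e₀.card = 1 := by
        rw [he₀card]; exact Even.neg_one_pow hreven
      rw [hneg, hone, one_mul]
  -- conclude
  have hzero : (0 : ℤ) = ∑ φ ∈ F.filter (fun φ => pdom φ = e₀),
      ((2 ^ (n - r) : ℕ) * eps φ₀ : ℤ) := by
    rw [← hT0, hTdec, ← Finset.sum_filter_of_ne (p := fun φ => pdom φ = e₀)
      (by intro φ hφ hne; by_contra hc; exact hne (hvanish φ hφ hc))]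
    apply Finset.sum_congr rfl
    intro φ hφ
    rw [Finset.mem_filter] at hφ
    rw [hfibval φ hφ.1 hφ.2, hepsconst φ hφ.1 hφ.2]
  rw [Finset.sum_const, nsmul_eq_mul] at hzero
  have hfibne : φ₀ ∈ F.filter (fun φ => pdom φ = e₀) :=
    Finset.mem_filter.mpr ⟨hφ₀F, rfl⟩
  have hfibpos : 0 < (F.filter (fun φ => pdom φ = e₀)).card :=
    Finset.card_pos.mpr ⟨φ₀, hfibne⟩
  have hepsne : eps φ₀ ≠ 0 := by
    rw [heps]
    apply Finset.prod_ne_zero_iff.mpr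
    intro x _
    split <;> norm_num
  have hpowne : ((2 : ℤ) ^ (n - r)) ≠ 0 := by positivity
  exact (mul_ne_zero (Nat.cast_ne_zero.mpr hfibpos.ne')
    (mul_ne_zero (Nat.cast_ne_zero.mpr (by positivity)) hepsne)) hzero.symm
end

section
/- For every r ≥ 1, if H is an r-uniform hypergraph on a finite set X that is not 2-DP-colorable (i.e., some 2-fold cover F of H admits no F-coloring), then |H| ≥ 2^{r−1}. -/
/-!
Union bound: a partial map with an `r`-element domain is extended by a `2^{-r}` fraction of all
total maps `X → Bool`, so if the members of `F` leave no total map uncovered then `2^r ≤ |F|`.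
On the other hand, the members of a 2-fold cover over a common nonempty edge are separated by
their value at any vertex of that edge, so at most two of them lie over each edge and
`|F| ≤ 2 |H|`.
-/

open Finset

section

variable {X : Type*} [Fintype X] [DecidableEq X]

lemma filter_pExtends_eq_piFinset (φ : X → Option Bool) :
    univ.filter (fun f : X → Bool => PExtends f φ) =
      Fintype.piFinset fun x => (φ x).elim univ singleton := by
  ext f
  simp only [mem_filter, mem_univ, true_and, Fintype.mem_piFinset]
  refine ⟨fun hf x => ?_, fun hf x b hb => ?_⟩
  · cases hx : φ x
    · simp
    · simp [hf x _ hx]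
  · simpa [hb] using hf x

lemma card_filter_pExtends (φ : X → Option Bool) :
    #(univ.filter fun f : X → Bool => PExtends f φ) = 2 ^ (Fintype.card X - #(pdom φ)) := by
  have hnone : #(univ.filter fun x => (φ x).isNone) = Fintype.card X - #(pdom φ) := by
    rw [pdom, ← card_compl]
    congr 1; ext x; simp
  rw [filter_pExtends_eq_piFinset, Fintype.card_piFinset, ← hnone, ← prod_const, prod_filter]
  refine prod_congr rfl fun x _ => ?_
  cases φ x <;> simp

lemma two_pow_card_le_sum_of_forall_exists_pExtends {F : Finset (X → Option Bool)}
    (h : ∀ f : X → Bool, ∃ φ ∈ F, PExtends f φ) :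
    2 ^ Fintype.card X ≤ ∑ φ ∈ F, 2 ^ (Fintype.card X - #(pdom φ)) :=
  calc 2 ^ Fintype.card X = #(univ : Finset (X → Bool)) := by simp
    _ ≤ #(F.biUnion fun φ => univ.filter fun f => PExtends f φ) :=
        card_le_card fun f _ => by simpa using h f
    _ ≤ ∑ φ ∈ F, #(univ.filter fun f => PExtends f φ) := card_biUnion_le
    _ = ∑ φ ∈ F, 2 ^ (Fintype.card X - #(pdom φ)) := by simp only [card_filter_pExtends]

lemma two_pow_le_card_of_forall_exists_pExtends {F : Finset (X → Option Bool)} {r : ℕ}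
    (hF : ∀ φ ∈ F, #(pdom φ) = r) (h : ∀ f : X → Bool, ∃ φ ∈ F, PExtends f φ) :
    2 ^ r ≤ #F := by
  obtain ⟨φ, hφ, -⟩ := h fun _ => true
  have hr : r ≤ Fintype.card X := hF φ hφ ▸ card_le_univ _
  have hsum := two_pow_card_le_sum_of_forall_exists_pExtends h
  rw [sum_congr rfl fun φ hφ => by rw [hF φ hφ], sum_const, smul_eq_mul,
    ← Nat.add_sub_cancel' hr, pow_add, Nat.add_sub_cancel_left] at hsum
  exact Nat.le_of_mul_le_mul_right hsum (by positivity)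

lemma card_filter_pdom_eq_le_two {F : Finset (X → Option Bool)}
    (hF : ∀ φ ∈ F, ∀ ψ ∈ F, φ ≠ ψ → pdom φ = pdom ψ → ∀ x ∈ pdom φ, φ x ≠ ψ x)
    (e : Finset X) : #(F.filter fun φ => pdom φ = e) ≤ 2 := by
  obtain rfl | ⟨x, hx⟩ := e.eq_empty_or_nonempty
  · refine (card_le_one.mpr fun φ hφ ψ hψ => ?_).trans one_le_two
    have hnone : ∀ χ ∈ F.filter (fun φ => pdom φ = ∅), χ = fun _ => none := fun χ hχ => by
      funext y
      have hy : y ∉ pdom χ := by simp [(mem_filter.mp hχ).2]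
      simpa [pdom] using hy
    rw [hnone φ hφ, hnone ψ hψ]
  · calc #(F.filter fun φ => pdom φ = e) ≤ #({none}ᶜ : Finset (Option Bool)) := by
          refine card_le_card_of_injOn (fun φ => φ x) (fun φ hφ => ?_) fun φ hφ ψ hψ hφψ => ?_
          · have hxφ : x ∈ pdom φ := (mem_filter.mp hφ).2 ▸ hx
            simpa [pdom, Option.isSome_iff_ne_none] using hxφ
          · rw [mem_coe, mem_filter] at hφ hψ
            by_contra hne
            exact hF φ hφ.1 ψ hψ.1 hne (hφ.2.trans hψ.2.symm) x (hφ.2 ▸ hx) hφψ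
      _ = 2 := rfl

lemma card_le_two_mul_card_of_isCover {H : Finset (Finset X)} {F : Finset (X → Option Bool)}
    (hcov : IsCover H F) : #F ≤ 2 * #H :=
  calc #F = ∑ e ∈ H, #(F.filter fun φ => pdom φ = e) := card_eq_sum_card_fiberwise hcov.1
    _ ≤ ∑ _e ∈ H, 2 := sum_le_sum fun e _ => card_filter_pdom_eq_le_two hcov.2 e
    _ = 2 * #H := by rw [sum_const, smul_eq_mul, mul_comm]

end

theorem stmt_7_general (r : ℕ) {X : Type*} [Fintype X]
    (H : Finset (Finset X)) (huniform : ∀ e ∈ H, e.card = r)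
    (F : Finset (X → Option Bool)) (hcov : IsCover H F)
    (h : ∀ f : X → Bool, ∃ φ ∈ F, PExtends f φ) :
    2 ^ (r - 1) ≤ H.card := by
  classical
  have hF : ∀ φ ∈ F, #(pdom φ) = r := fun φ hφ => huniform _ (hcov.1 φ hφ)
  have hr : 2 ^ r ≤ 2 * #H :=
    (two_pow_le_card_of_forall_exists_pExtends hF h).trans (card_le_two_mul_card_of_isCover hcov)
  cases r with
  | zero =>
    rw [pow_zero] at hr
    rw [Nat.zero_sub, pow_zero]
    omega
  | succ r => rw [pow_succ'] at hr; simpa using hr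

theorem stmt_7 (r : ℕ) (hr : 1 ≤ r) {X : Type*} [Fintype X]
    (H : Finset (Finset X)) (huniform : ∀ e ∈ H, e.card = r)
    (F : Finset (X → Option Bool)) (hcov : IsCover H F)
    (h : ∀ f : X → Bool, ∃ φ ∈ F, PExtends f φ) :
    2 ^ (r - 1) ≤ H.card :=
  stmt_7_general r H huniform F hcov h
end

section
/- m̃_2(4) ≤ 10: there exists a 4-uniform hypergraph with 10 edges that is not 2-DP-colorable. -/
open Finset

def L : List (Fin 6 → Option Bool) :=
  [![none, none, some false, some false, some false, some false],
   ![none, none, some true, some true, some true, some true],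
   ![none, some false, some true, none, some false, some false],
   ![none, some true, some false, none, some true, some true],
   ![some true, none, some false, some true, some false, none],
   ![some false, none, some true, some false, some true, none],
   ![none, some true, some true, some false, none, some false],
   ![none, some false, some false, some true, none, some true],
   ![none, some false, none, some true, some true, some false],
   ![none, some true, none, some false, some false, some true],
   ![some false, some false, some false, none, none, some false],
   ![some true, some true, some true, none, none, some true],
   ![some true, some true, none, some true, none, some false],
   ![some false, some false, none, some false, none, some true],
   ![some false, some true, none, some true, some false, none],
   ![some true, some false, none, some false, some true, none],
   ![some false, some true, none, none, some true, some false],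
   ![some true, some false, none, none, some false, some true],
   ![some true, none, some false, some false, none, some false],
   ![some false, none, some true, some true, none, some true]]

set_option maxRecDepth 100000 in
def Fs : Finset (Fin 6 → Option Bool) := ⟨↑L, by decide⟩

def Hs : Finset (Finset (Fin 6)) :=
  {{2, 3, 4, 5}, {1, 2, 4, 5}, {0, 2, 3, 4}, {1, 2, 3, 5}, {1, 3, 4, 5},
   {0, 1, 2, 5}, {0, 1, 3, 5}, {0, 1, 3, 4}, {0, 1, 4, 5}, {0, 2, 3, 5}}

lemma memFs (a : Fin 6 → Option Bool) : a ∈ Fs ↔ a ∈ L := by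
  simp [Fs, Finset.mem_mk]

set_option maxRecDepth 100000 in
lemma L1 : ∀ φ ∈ L, pdom φ ∈ Hs := by decide

set_option maxRecDepth 100000 in
set_option maxHeartbeats 4000000 in
lemma L2 : ∀ φ ∈ L, ∀ ψ ∈ L, φ ≠ ψ → pdom φ = pdom ψ → ∀ x ∈ pdom φ, φ x ≠ ψ x := by decide

set_option maxRecDepth 100000 in
lemma key : ∀ a b c d e g : Bool, ∃ φ ∈ L, PExtends ![a, b, c, d, e, g] φ := by decide

set_option maxRecDepth 100000 in
theorem stmt_13 :
    ∃ (m : ℕ) (H : Finset (Finset (Fin m))) (F : Finset (Fin m → Option Bool)),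
      (∀ e ∈ H, e.card = 4) ∧ H.card = 10 ∧ IsCover H F ∧
      (∀ f : Fin m → Bool, ∃ φ ∈ F, PExtends f φ) := by
  refine ⟨6, Hs, Fs, by decide, by decide, ⟨?_, ?_⟩, ?_⟩
  · intro φ hφ; exact L1 φ ((memFs φ).1 hφ)
  · intro φ hφ ψ hψ; exact L2 φ ((memFs φ).1 hφ) ψ ((memFs ψ).1 hψ)
  · intro f
    have hrep : f = ![f 0, f 1, f 2, f 3, f 4, f 5] := by
      funext x; fin_cases x <;> rfl
    rw [hrep]
    obtain ⟨φ, hφ, hext⟩ := key (f 0) (f 1) (f 2) (f 3) (f 4) (f 5)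
    exact ⟨φ, (memFs φ).2 hφ, hext⟩
end

section
/- For all r ≥ 3, m̃_2(r) ≤ m̃'_2(r − 1): if there exists a unary (r−1)-uniform family of size m of partial functions to {0,1} with no coloring avoiding all its members, then there exists a non-2-DP-colorable r-uniform hypergraph with at most m edges. -/
/-!
Add a new vertex `0` to every domain. Each `φ ∈ F` yields the two maps `φ_b` sending `0 ↦ b` and
`x ↦ b xor φ x`; they share the edge `{0} ∪ dom φ` and disagree everywhere on it, while unarity keeps
maps coming from different members of `F` on different edges. A coloring `f` extends `φ_{f 0}` as
soon as the recolored map `x ↦ f 0 xor f x` extends `φ`, so a family with no coloring yields a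
cover with no coloring.
-/

open Finset

section ConsXor

variable {n : ℕ}

def consXor (b : Bool) (φ : Fin n → Option Bool) : Fin (n + 1) → Option Bool :=
  Fin.cons (some b) fun i => (φ i).map (xor b)

lemma pdom_consXor (b : Bool) (φ : Fin n → Option Bool) :
    pdom (consXor b φ) = insert 0 ((pdom φ).map (Fin.succEmb n)) := by
  ext x
  cases x using Fin.cases <;> simp [mem_pdom, consXor, Fin.succ_ne_zero]

lemma card_pdom_consXor (b : Bool) (φ : Fin n → Option Bool) :
    (pdom (consXor b φ)).card = (pdom φ).card + 1 := by
  rw [pdom_consXor, card_insert_of_notMem (by simp [Fin.succ_ne_zero]), card_map]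

lemma pdom_consXor_injective {b c : Bool} {φ ψ : Fin n → Option Bool}
    (h : pdom (consXor b φ) = pdom (consXor c ψ)) : pdom φ = pdom ψ := by
  rw [pdom_consXor, pdom_consXor] at h
  ext i
  simpa [Fin.succ_ne_zero] using congrArg (Fin.succ i ∈ ·) h

lemma consXor_apply_ne {b c : Bool} (hbc : b ≠ c) (φ : Fin n → Option Bool) {x : Fin (n + 1)}
    (hx : x ∈ pdom (consXor b φ)) : consXor b φ x ≠ consXor c φ x := by
  cases x using Fin.cases with
  | zero => simpa [consXor] using hbc
  | succ i =>
    obtain ⟨v, hv⟩ := Option.isSome_iff_exists.mp (by simpa [mem_pdom, consXor] using hx)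
    cases b <;> cases c <;> cases v <;> simp_all [consXor]

lemma PExtends.consXor {f : Fin (n + 1) → Bool} {φ : Fin n → Option Bool}
    (h : PExtends (fun i => xor (f 0) (f i.succ)) φ) : PExtends f (consXor (f 0) φ) := by
  intro x b hx
  cases x using Fin.cases with
  | zero => simpa [_root_.consXor] using hx
  | succ i =>
    obtain ⟨v, hv, rfl⟩ := Option.map_eq_some_iff.mp hx
    simp [← h i v hv]

end ConsXor

section Family

variable {n : ℕ}

def consXorFamily (F : Finset (Fin n → Option Bool)) : Finset (Fin (n + 1) → Option Bool) :=
  univ.biUnion fun b => F.image (consXor b)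

lemma mem_consXorFamily {F : Finset (Fin n → Option Bool)} {φ' : Fin (n + 1) → Option Bool} :
    φ' ∈ consXorFamily F ↔ ∃ b, ∃ φ ∈ F, consXor b φ = φ' := by
  simp [consXorFamily, Bool.exists_bool, or_comm]

lemma isCover_consXorFamily {F : Finset (Fin n → Option Bool)}
    (hunary : ∀ φ ∈ F, ∀ ψ ∈ F, pdom φ = pdom ψ → φ = ψ) :
    IsCover (F.image fun φ => pdom (consXor false φ)) (consXorFamily F) := by
  constructor
  · rintro _ h
    obtain ⟨b, φ, hφ, rfl⟩ := mem_consXorFamily.mp h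
    exact mem_image.mpr ⟨φ, hφ, by rw [pdom_consXor, pdom_consXor]⟩
  · intro φ' hφ' ψ' hψ' hne hdom
    obtain ⟨b, φ, hφ, rfl⟩ := mem_consXorFamily.mp hφ'
    obtain ⟨c, ψ, hψ, rfl⟩ := mem_consXorFamily.mp hψ'
    obtain rfl := hunary φ hφ ψ hψ (pdom_consXor_injective hdom)
    exact fun x hx => consXor_apply_ne (fun hbc => hne (by rw [hbc])) φ hx

lemma exists_pExtends_consXorFamily {F : Finset (Fin n → Option Bool)}
    (h : ∀ f : Fin n → Bool, ∃ φ ∈ F, PExtends f φ) (f : Fin (n + 1) → Bool) :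
    ∃ φ' ∈ consXorFamily F, PExtends f φ' := by
  obtain ⟨φ, hφ, hf⟩ := h fun i => xor (f 0) (f i.succ)
  exact ⟨consXor (f 0) φ, mem_consXorFamily.mpr ⟨f 0, φ, hφ, rfl⟩, hf.consXor⟩

end Family

theorem stmt_15 (r m : ℕ) (hr : 3 ≤ r) (n : ℕ) (F : Finset (Fin n → Option Bool))
    (huniform : ∀ φ ∈ F, (pdom φ).card = r - 1)
    (hunary : ∀ φ ∈ F, ∀ ψ ∈ F, pdom φ = pdom ψ → φ = ψ)
    (hcard : F.card = m)
    (h : ∀ f : Fin n → Bool, ∃ φ ∈ F, PExtends f φ) :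
    ∃ (n' : ℕ) (H : Finset (Finset (Fin n'))) (F' : Finset (Fin n' → Option Bool)),
      (∀ e ∈ H, e.card = r) ∧ H.card ≤ m ∧ IsCover H F' ∧
      (∀ f : Fin n' → Bool, ∃ φ ∈ F', PExtends f φ) := by
  refine ⟨n + 1, F.image fun φ => pdom (consXor false φ), consXorFamily F, ?_,
    hcard ▸ card_image_le, isCover_consXorFamily hunary, exists_pExtends_consXorFamily h⟩
  simp only [mem_image, forall_exists_index, and_imp]
  rintro _ φ hφ rfl
  rw [card_pdom_consXor, huniform φ hφ]
  omega
end

section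
/- For all r ≥ 3, m̃'_2(r) ≤ 2·m̃'_2(r−1): given a unary (r−1)-uniform family of size m with no coloring, one can construct a unary r-uniform family of size 2m with no coloring. -/
open Finset

/-!
Take a new point `z` and two disjoint copies of the ground set, indexed by `b : Bool` (the new
ground set is `Option (Bool × X)`, with `none` as `z`). Each member `φ` of the old family gives two
members: for each `b`, `φ` placed on copy `b` together with `z ↦ b`. Domains grow by one and stay
distinct, because members with nonempty domains on different copies have different domains. A total
map `f` is caught on the copy `f z`: if its restriction there extends `φ`, then `f` extends the
member built from `φ` on that copy.
-/

section Families

variable {α : Type*}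

def IsUncolorable (F : Finset (α → Option Bool)) : Prop :=
  ∀ f : α → Bool, ∃ φ ∈ F, PExtends f φ

variable [Fintype α]

def IsUniform (r : ℕ) (F : Finset (α → Option Bool)) : Prop :=
  ∀ φ ∈ F, (pdom φ).card = r

def IsUnary (F : Finset (α → Option Bool)) : Prop :=
  ∀ φ ∈ F, ∀ ψ ∈ F, pdom φ = pdom ψ → φ = ψ

lemma mem_pdom_iff (φ : α → Option Bool) (x : α) : x ∈ pdom φ ↔ (φ x).isSome := by
  simp [pdom]

end Families

section Transport

variable {α β : Type*} (e : α ≃ β)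

lemma pdom_comp_symm [Fintype α] [Fintype β] (φ : α → Option Bool) :
    pdom (φ ∘ e.symm) = (pdom φ).map e.toEmbedding := by
  ext y
  simp [pdom]

lemma pextends_comp_symm_iff (f : β → Bool) (φ : α → Option Bool) :
    PExtends f (φ ∘ e.symm) ↔ PExtends (f ∘ e) φ := by
  simp only [PExtends, e.forall_congr_left, Function.comp_apply, e.apply_symm_apply]

def transportFamily (F : Finset (α → Option Bool)) : Finset (β → Option Bool) :=
  F.map (e.arrowCongr (Equiv.refl (Option Bool))).toEmbedding

lemma card_transportFamily (F : Finset (α → Option Bool)) :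
    (transportFamily e F).card = F.card :=
  card_map _

lemma mem_transportFamily {F : Finset (α → Option Bool)} {ψ : β → Option Bool} :
    ψ ∈ transportFamily e F ↔ ∃ φ ∈ F, φ ∘ e.symm = ψ := by
  rw [transportFamily, mem_map]
  rfl

variable {e}

lemma IsUncolorable.transportFamily {F : Finset (α → Option Bool)} (hF : IsUncolorable F) :
    IsUncolorable (transportFamily e F) := by
  intro f
  obtain ⟨φ, hφ, hext⟩ := hF (f ∘ e)
  exact ⟨φ ∘ e.symm, (mem_transportFamily e).2 ⟨φ, hφ, rfl⟩,
    (pextends_comp_symm_iff e f φ).2 hext⟩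

variable [Fintype α] [Fintype β]

lemma IsUniform.transportFamily {r : ℕ} {F : Finset (α → Option Bool)} (hF : IsUniform r F) :
    IsUniform r (transportFamily e F) := by
  intro ψ hψ
  obtain ⟨φ, hφ, rfl⟩ := (mem_transportFamily e).1 hψ
  rw [pdom_comp_symm, card_map, hF φ hφ]

lemma IsUnary.transportFamily {F : Finset (α → Option Bool)} (hF : IsUnary F) :
    IsUnary (transportFamily e F) := by
  intro ψ hψ ψ' hψ' hdom
  obtain ⟨φ, hφ, rfl⟩ := (mem_transportFamily e).1 hψ
  obtain ⟨φ', hφ', rfl⟩ := (mem_transportFamily e).1 hψ'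
  rw [pdom_comp_symm, pdom_comp_symm, map_inj] at hdom
  rw [hF φ hφ φ' hφ' hdom]

end Transport

section Doubling

variable {X : Type*}

def markedCopy (b : Bool) (φ : X → Option Bool) : Option (Bool × X) → Option Bool
  | none => some b
  | some (c, x) => if c = b then φ x else none

lemma markedCopy_injective :
    Function.Injective (fun p : (X → Option Bool) × Bool => markedCopy p.2 p.1) := by
  rintro ⟨φ, b⟩ ⟨ψ, c⟩ h
  have hbc : b = c := Option.some_injective _ (congrFun h none)
  subst hbc
  ext1
  · funext x
    simpa [markedCopy] using congrFun h (some (b, x))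
  · rfl

lemma pextends_markedCopy {f : Option (Bool × X) → Bool} {φ : X → Option Bool}
    (h : PExtends (fun x => f (some (f none, x))) φ) : PExtends f (markedCopy (f none) φ) := by
  rintro (_ | ⟨c, x⟩) a ha
  · simpa [markedCopy] using ha
  · by_cases hc : c = f none
    · subst hc
      simp only [markedCopy, if_true] at ha
      exact h x a ha
    · simp [markedCopy, hc] at ha

def doubleFamily (F : Finset (X → Option Bool)) : Finset (Option (Bool × X) → Option Bool) :=
  (F ×ˢ univ).map ⟨_, markedCopy_injective⟩

lemma mem_doubleFamily {F : Finset (X → Option Bool)} {ψ : Option (Bool × X) → Option Bool} :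
    ψ ∈ doubleFamily F ↔ ∃ φ ∈ F, ∃ b, markedCopy b φ = ψ := by
  simp [doubleFamily]

lemma card_doubleFamily (F : Finset (X → Option Bool)) :
    (doubleFamily F).card = 2 * F.card := by
  rw [doubleFamily, card_map, card_product, card_univ, Fintype.card_bool, mul_comm]

lemma IsUncolorable.doubleFamily {F : Finset (X → Option Bool)} (hF : IsUncolorable F) :
    IsUncolorable (doubleFamily F) := by
  intro f
  obtain ⟨φ, hφ, hext⟩ := hF fun x => f (some (f none, x))
  exact ⟨markedCopy (f none) φ, mem_doubleFamily.2 ⟨φ, hφ, _, rfl⟩, pextends_markedCopy hext⟩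

variable [Fintype X]

lemma some_mem_pdom_markedCopy_iff (b c : Bool) (φ : X → Option Bool) (x : X) :
    some (c, x) ∈ pdom (markedCopy b φ) ↔ c = b ∧ x ∈ pdom φ := by
  rw [mem_pdom_iff, mem_pdom_iff]
  by_cases hc : c = b <;> simp [markedCopy, hc]

lemma pdom_markedCopy (b : Bool) (φ : X → Option Bool) :
    pdom (markedCopy b φ) = ((pdom φ).map (Function.Embedding.sectR b X)).insertNone := by
  ext (_ | ⟨c, x⟩)
  · simp [mem_pdom_iff, markedCopy]
  · rw [some_mem_pdom_markedCopy_iff, some_mem_insertNone]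
    simp [and_comm, eq_comm]

lemma card_pdom_markedCopy (b : Bool) (φ : X → Option Bool) :
    (pdom (markedCopy b φ)).card = (pdom φ).card + 1 := by
  rw [pdom_markedCopy, card_insertNone, card_map]

lemma eq_and_pdom_eq_of_pdom_markedCopy_eq {b c : Bool} {φ ψ : X → Option Bool}
    (hφ : (pdom φ).Nonempty) (h : pdom (markedCopy b φ) = pdom (markedCopy c ψ)) :
    b = c ∧ pdom φ = pdom ψ := by
  have hmem : ∀ d x, (d = b ∧ x ∈ pdom φ) ↔ (d = c ∧ x ∈ pdom ψ) := fun d x => by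
    rw [← some_mem_pdom_markedCopy_iff, ← some_mem_pdom_markedCopy_iff, h]
  obtain ⟨x, hx⟩ := hφ
  have hbc : b = c := ((hmem b x).1 ⟨rfl, hx⟩).1
  subst hbc
  exact ⟨rfl, ext fun x => by simpa using hmem b x⟩

lemma IsUniform.doubleFamily {r : ℕ} {F : Finset (X → Option Bool)} (hF : IsUniform r F) :
    IsUniform (r + 1) (doubleFamily F) := by
  intro ψ hψ
  obtain ⟨φ, hφ, b, rfl⟩ := mem_doubleFamily.1 hψ
  rw [card_pdom_markedCopy, hF φ hφ]

lemma IsUnary.doubleFamily {F : Finset (X → Option Bool)} (hF : IsUnary F)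
    (hne : ∀ φ ∈ F, (pdom φ).Nonempty) : IsUnary (doubleFamily F) := by
  intro ψ hψ ψ' hψ' hdom
  obtain ⟨φ, hφ, b, rfl⟩ := mem_doubleFamily.1 hψ
  obtain ⟨φ', hφ', b', rfl⟩ := mem_doubleFamily.1 hψ'
  obtain ⟨rfl, hdom'⟩ := eq_and_pdom_eq_of_pdom_markedCopy_eq (hne φ hφ) hdom
  rw [hF φ hφ φ' hφ' hdom']

end Doubling

theorem stmt_16 (r m : ℕ) (hr : 3 ≤ r) (n : ℕ) (F : Finset (Fin n → Option Bool))
    (huniform : ∀ φ ∈ F, (pdom φ).card = r - 1)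
    (hunary : ∀ φ ∈ F, ∀ ψ ∈ F, pdom φ = pdom ψ → φ = ψ)
    (hcard : F.card = m)
    (h : ∀ f : Fin n → Bool, ∃ φ ∈ F, PExtends f φ) :
    ∃ (n' : ℕ) (F' : Finset (Fin n' → Option Bool)),
      (∀ φ ∈ F', (pdom φ).card = r) ∧
      (∀ φ ∈ F', ∀ ψ ∈ F', pdom φ = pdom ψ → φ = ψ) ∧
      F'.card = 2 * m ∧
      (∀ f : Fin n' → Bool, ∃ φ ∈ F', PExtends f φ) := by
  have hne : ∀ φ ∈ F, (pdom φ).Nonempty := fun φ hφ =>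
    card_pos.1 (by rw [huniform φ hφ]; omega)
  have hr' : r - 1 + 1 = r := by omega
  let e := Fintype.equivFin (Option (Bool × Fin n))
  refine ⟨_, transportFamily e (doubleFamily F), ?_, ?_, ?_, ?_⟩
  · exact hr' ▸ (IsUniform.doubleFamily huniform).transportFamily
  · exact (IsUnary.doubleFamily hunary hne).transportFamily
  · rw [card_transportFamily, card_doubleFamily, hcard]
  · exact (IsUncolorable.doubleFamily h).transportFamily
end

section
/- Let r ≥ 1 and let X = {x_0,…,x_{r−1}} and Y = {y_0,…,y_{r−1}} be disjoint r-element sets. Let H be the r-uniform hypergraph on X ∪ Y whose edges are the sets e with |e ∩ {x_i, y_i}| = 1 for all i. There exists a family F of partial functions from X ∪ Y to {0,1}, one function φ_e with domain e for each e ∈ H (so F is unary with dom(F) = H), such that every F-coloring f : X ∪ Y → {0,1} satisfies: f(x_i) ≠ f(y_i) for all i, and the number of indices i with f(x_i) = 1 is odd. -/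
/-!
Write `(i, false)` for `x_i` and `(i, true)` for `y_i`. The edges of `H` are the transversals
`{(i, s i)}` for `s : Fin r → Bool`, and `φ_s` colours `(i, s i)` with `s (i + 1)`, indices
taken cyclically. A colouring `f` extends `φ_s` iff `s (i + 1) = f (i, s i)` for all `i`, i.e.
iff `s` is a closed orbit of the maps `g_i = f (i, ·)` around the cycle; such an orbit exists
iff the composite `g_{r-1} ∘ ⋯ ∘ g_0` has a fixed point. If some `g_i` is constant, so is the
composite, which then has a fixed point. Otherwise every `g_i` is `b ↦ f (x_i) xor b`, the
composite is `xor` with the parity of `#{i | f (x_i) = 1}`, and it has a fixed point iff that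
number is even.
-/

open Finset

section OrbitAlong

variable {α : Type*} {r : ℕ}

def orbitAlong (g : Fin r → α → α) (x : α) : Fin (r + 1) → α :=
  Fin.induction x fun i a => g i a

@[simp]
lemma orbitAlong_zero (g : Fin r → α → α) (x : α) : orbitAlong g x 0 = x :=
  Fin.induction_zero ..

@[simp]
lemma orbitAlong_succ (g : Fin r → α → α) (x : α) (i : Fin r) :
    orbitAlong g x i.succ = g i (orbitAlong g x i.castSucc) :=
  Fin.induction_succ ..

lemma exists_cyclic_solution_of_orbitAlong_last_eq {g : Fin r → α → α} {x : α}
    (h : orbitAlong g x (Fin.last r) = x) :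
    ∃ s : Fin r → α, ∀ i, s (finRotate r i) = g i (s i) := by
  refine ⟨fun i => orbitAlong g x i.castSucc, fun i => ?_⟩
  show orbitAlong g x (finRotate r i).castSucc = g i (orbitAlong g x i.castSucc)
  rw [← orbitAlong_succ g x i]
  obtain _ | n := r
  · exact i.elim0
  obtain rfl | hi := eq_or_ne i (Fin.last n)
  · rw [finRotate_last, Fin.castSucc_zero, orbitAlong_zero, Fin.succ_last, h]
  · congr 1
    ext
    rw [Fin.val_castSucc, coe_finRotate_of_ne_last hi, Fin.val_succ]

lemma orbitAlong_eq_of_castSucc_lt {g : Fin r → α → α} {i₀ : Fin r}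
    (hg : ∀ a b, g i₀ a = g i₀ b) (x y : α) :
    ∀ j, i₀.castSucc < j → orbitAlong g x j = orbitAlong g y j := by
  refine Fin.induction (by simp) fun i ih hi => ?_
  rw [orbitAlong_succ, orbitAlong_succ]
  obtain h | rfl := (Fin.castSucc_lt_succ_iff.1 hi).lt_or_eq
  · rw [ih (Fin.castSucc_lt_castSucc_iff.2 h)]
  · exact hg _ _

lemma exists_orbitAlong_last_eq_of_const {g : Fin r → α → α} {i₀ : Fin r}
    (hg : ∀ a b, g i₀ a = g i₀ b) (y : α) : ∃ x, orbitAlong g x (Fin.last r) = x :=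
  ⟨orbitAlong g y (Fin.last r),
    orbitAlong_eq_of_castSucc_lt hg _ _ _ (Fin.castSucc_lt_last i₀)⟩

lemma card_filter_castSucc_lt_succ (p : Fin r → Prop) [DecidablePred p] (k : Fin r) :
    #{i | i.castSucc < k.succ ∧ p i} =
      #{i | i.castSucc < k.castSucc ∧ p i} + if p k then 1 else 0 := by
  have : univ.filter (fun i : Fin r => i.castSucc < k.succ ∧ p i) =
      univ.filter (fun i => i.castSucc < k.castSucc ∧ p i) ∪
        univ.filter (fun i => i = k ∧ p i) := by
    ext i
    simp only [Fin.castSucc_lt_succ_iff, Fin.castSucc_lt_castSucc_iff, le_iff_lt_or_eq, mem_union,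
      mem_filter, mem_univ, true_and]
    tauto
  rw [this, card_union_of_disjoint]
  · split_ifs with hk <;> simp [hk, filter_and, filter_eq']
  · simp +contextual [disjoint_left, ne_of_lt]

lemma orbitAlong_xor (a : Fin r → Bool) (x : Bool) (j : Fin (r + 1)) :
    orbitAlong (fun i => xor (a i)) x j = xor x (decide (Odd #{i | i.castSucc < j ∧ a i})) := by
  induction j using Fin.induction with
  | zero => simp
  | succ k ih =>
    rw [orbitAlong_succ, ih, card_filter_castSucc_lt_succ]
    cases a k <;> simp [Nat.odd_add_one, ← Nat.not_even_iff_odd]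

end OrbitAlong

section Transversal

variable {r : ℕ}

def transversalMap (s : Fin r → Bool) : Fin r × Bool → Option Bool :=
  fun p => if p.2 = s p.1 then some (s (finRotate r p.1)) else none

lemma mem_pdom_transversalMap (s : Fin r → Bool) (p : Fin r × Bool) :
    p ∈ pdom (transversalMap s) ↔ p.2 = s p.1 := by
  by_cases h : p.2 = s p.1 <;> simp [pdom, transversalMap, h]

lemma pdom_transversalMap_eq_iff {s : Fin r → Bool} {e : Finset (Fin r × Bool)}
    (he : ∀ i, ((i, false) ∈ e ∧ (i, true) ∉ e) ∨
      ((i, false) ∉ e ∧ (i, true) ∈ e)) :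
    pdom (transversalMap s) = e ↔ s = fun i => decide ((i, true) ∈ e) := by
  constructor
  · rintro rfl
    ext i
    simp only [mem_pdom_transversalMap]
    cases s i <;> rfl
  · rintro rfl
    ext ⟨i, b⟩
    rw [mem_pdom_transversalMap]
    rcases he i with ⟨h₁, h₂⟩ | ⟨h₁, h₂⟩ <;> cases b <;> simp [h₁, h₂]

lemma pExtends_transversalMap {s : Fin r → Bool} {f : Fin r × Bool → Bool}
    (h : ∀ i, s (finRotate r i) = f (i, s i)) : PExtends f (transversalMap s) := by
  rintro ⟨i, c⟩ b hb
  by_cases hc : c = s i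
  · simp only [transversalMap, hc, if_true, Option.some_inj] at hb
    rw [hc, ← h, hb]
  · simp [transversalMap, hc] at hb

end Transversal

theorem stmt_17_general (r : ℕ) :
    ∃ F : Finset (Fin r × Bool → Option Bool),
      (∀ φ ∈ F, pdom φ ∈ (Finset.univ.filter (fun e : Finset (Fin r × Bool) =>
        ∀ i : Fin r, ((i, false) ∈ e ∧ (i, true) ∉ e) ∨ ((i, false) ∉ e ∧ (i, true) ∈ e)))) ∧
      (∀ e ∈ (Finset.univ.filter (fun e : Finset (Fin r × Bool) =>
        ∀ i : Fin r, ((i, false) ∈ e ∧ (i, true) ∉ e) ∨ ((i, false) ∉ e ∧ (i, true) ∈ e))),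
        ∃! φ, φ ∈ F ∧ pdom φ = e) ∧
      (∀ f : Fin r × Bool → Bool, (∀ φ ∈ F, ¬ PExtends f φ) →
        (∀ i : Fin r, f (i, false) ≠ f (i, true)) ∧
        Odd (Finset.univ.filter (fun i : Fin r => f (i, false) = true)).card) := by
  refine ⟨univ.image transversalMap, ?_, ?_, fun f hf => ?_⟩
  · simp only [mem_image, mem_univ, true_and, mem_filter, forall_exists_index,
      forall_apply_eq_imp_iff]
    intro s i
    cases hs : s i <;> simp [mem_pdom_transversalMap, hs]
  · intro e he
    rw [mem_filter] at he
    refine ⟨transversalMap _,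
      ⟨mem_image_of_mem _ (mem_univ _), (pdom_transversalMap_eq_iff he.2).2 rfl⟩, ?_⟩
    rintro _ ⟨hφ, hdom⟩
    obtain ⟨s, -, rfl⟩ := mem_image.1 hφ
    rw [(pdom_transversalMap_eq_iff he.2).1 hdom]
  have not_closed : ∀ x, orbitAlong (fun i b => f (i, b)) x (Fin.last r) ≠ x := fun x hx =>
    let ⟨s, hs⟩ := exists_cyclic_solution_of_orbitAlong_last_eq hx
    hf _ (mem_image_of_mem _ (mem_univ s)) (pExtends_transversalMap hs)
  have hne : ∀ i, f (i, false) ≠ f (i, true) := fun i hi =>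
    let ⟨x, hx⟩ := exists_orbitAlong_last_eq_of_const (i₀ := i)
      (by rintro (_ | _) (_ | _) <;> simp [hi]) false
    not_closed x hx
  refine ⟨hne, by_contra fun hodd => not_closed false ?_⟩
  have hxor : (fun i b => f (i, b)) = fun i => xor (f (i, false)) := by
    ext i (_ | _)
    · simp
    · simpa using Bool.eq_not_of_ne (hne i).symm
  simpa [hxor, orbitAlong_xor, Fin.castSucc_lt_last] using hodd

theorem stmt_17 (r : ℕ) (hr : 1 ≤ r) :
    ∃ F : Finset (Fin r × Bool → Option Bool),
      (∀ φ ∈ F, pdom φ ∈ (Finset.univ.filter (fun e : Finset (Fin r × Bool) =>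
        ∀ i : Fin r, ((i, false) ∈ e ∧ (i, true) ∉ e) ∨ ((i, false) ∉ e ∧ (i, true) ∈ e)))) ∧
      (∀ e ∈ (Finset.univ.filter (fun e : Finset (Fin r × Bool) =>
        ∀ i : Fin r, ((i, false) ∈ e ∧ (i, true) ∉ e) ∨ ((i, false) ∉ e ∧ (i, true) ∈ e))),
        ∃! φ, φ ∈ F ∧ pdom φ = e) ∧
      (∀ f : Fin r × Bool → Bool, (∀ φ ∈ F, ¬ PExtends f φ) →
        (∀ i : Fin r, f (i, false) ≠ f (i, true)) ∧
        Odd (Finset.univ.filter (fun i : Fin r => f (i, false) = true)).card) :=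
  stmt_17_general r
end

section
/- For all even r ≥ 2, m̃'_2(r) ≤ 2^r + 2^{r/2}: there exists a unary r-uniform family of partial functions to {0,1} of size 2^r + 2^{r/2} with no F-coloring. -/
open Finset

lemma zmod_neg_one_val {k : ℕ} [NeZero k] : ((-1 : ZMod k)).val = k - 1 := by
  rcases Nat.exists_eq_succ_of_ne_zero (NeZero.ne k) with ⟨j, rfl⟩
  exact ZMod.val_neg_one j

lemma zmod_eq_neg_one_of_val {k : ℕ} [NeZero k] (x : ZMod k) (h : x.val = k - 1) :
    x = -1 := by
  have h1 : ((x.val : ℕ) : ZMod k) = x := ZMod.natCast_rightInverse x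
  have h2 : (((-1 : ZMod k).val : ℕ) : ZMod k) = -1 := ZMod.natCast_rightInverse _
  rw [← h1, h, ← zmod_neg_one_val (k := k), h2]

lemma zmod_val_succ {k : ℕ} [NeZero k] (j : ZMod k) (h : j ≠ -1) :
    (j + 1).val = j.val + 1 := by
  have hne : j.val ≠ k - 1 := fun hc => h (zmod_eq_neg_one_of_val j hc)
  have hlt : j.val < k := ZMod.val_lt j
  have hk2 : 2 ≤ k := by
    by_contra hc
    have hk1 : k = 1 := by
      have : 1 ≤ k := Nat.one_le_iff_ne_zero.mpr (NeZero.ne k); omega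
    subst hk1
    exact h (Subsingleton.elim _ _)
  have h1 : (1 : ZMod k).val = 1 := by
    rw [ZMod.val_one_eq_one_mod]; exact Nat.mod_eq_of_lt hk2
  rw [ZMod.val_add, h1, Nat.mod_eq_of_lt (by omega)]

/-- Chain lemma A: if some link is constant, the cyclic chain is solvable. -/
lemma chainA {k : ℕ} [NeZero k] (H : ZMod k → Bool → Bool) (j₀ : ZMod k)
    (hc : H j₀ true = H j₀ false) :
    ∃ v : ZMod k → Bool, ∀ j, v (j + 1) = H j (v j) := by
  have hcon : ∀ x, H j₀ x = H j₀ true := by intro x; cases x <;> simp [hc]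
  let W : ℕ → Bool := fun n => Nat.rec (H j₀ true) (fun d acc => H (j₀ + 1 + (d : ZMod k)) acc) n
  have hW0 : W 0 = H j₀ true := rfl
  have hWs : ∀ d, W (d + 1) = H (j₀ + 1 + (d : ZMod k)) (W d) := fun d => rfl
  refine ⟨fun i => W ((i - (j₀ + 1)).val), ?_⟩
  intro j
  show W (((j + 1) - (j₀ + 1)).val) = H j (W ((j - (j₀ + 1)).val))
  by_cases hj : j = j₀
  · rw [hj]
    have h0 : ((j₀ + 1) - (j₀ + 1)).val = 0 := by simp
    rw [h0, hW0]; exact (hcon _).symm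
  · set x : ZMod k := j - (j₀ + 1) with hx
    have hxne : x ≠ -1 := by
      intro hc2
      apply hj
      have hje : j = x + (j₀ + 1) := by rw [hx]; ring
      rw [hje, hc2]; ring
    have hval : ((j + 1) - (j₀ + 1)).val = x.val + 1 := by
      have he : (j + 1) - (j₀ + 1) = x + 1 := by rw [hx]; ring
      rw [he, zmod_val_succ x hxne]
    rw [hval, hWs]
    congr 1
    have hv : ((x.val : ℕ) : ZMod k) = x := ZMod.natCast_rightInverse x
    rw [hv, hx]; ring

def bind01 (b : Bool) : ZMod 2 := if b then 1 else 0

lemma sum_zmod_range {k : ℕ} [NeZero k] (F : ZMod k → ZMod 2) :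
    ∑ j : ZMod k, F j = ∑ a ∈ Finset.range k, F (a : ZMod k) := by
  refine Finset.sum_nbij' (fun (x : ZMod k) => x.val) (fun (a : ℕ) => (a : ZMod k))
    ?_ ?_ ?_ ?_ ?_
  · intro a _; exact Finset.mem_range.mpr (ZMod.val_lt a)
  · intro a _; exact Finset.mem_univ _
  · intro x _; exact ZMod.natCast_rightInverse x
  · intro a ha; exact ZMod.val_cast_of_lt (Finset.mem_range.mp ha)
  · intro x _
    congr 1
    exact (ZMod.natCast_rightInverse x).symm

lemma decide_xor_helper : ∀ (x : ZMod 2) (b : Bool),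
    decide (x + bind01 b = 1) = xor (decide (x = 1)) b := by decide

/-- Chain lemma B: all links xor-type, total parity even. -/
lemma chainB {k : ℕ} [NeZero k] (τ : ZMod k → Bool)
    (h : ∑ j : ZMod k, bind01 (τ j) = 0) :
    ∃ v : ZMod k → Bool, ∀ j, v (j + 1) = xor (v j) (τ j) := by
  let S : ℕ → ZMod 2 := fun a => ∑ i ∈ Finset.range a, bind01 (τ (i : ZMod k))
  have hSs : ∀ a, S (a + 1) = S a + bind01 (τ (a : ZMod k)) := by
    intro a; simp only [S, Finset.sum_range_succ]
  have hSk : S k = 0 := by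
    have := sum_zmod_range (fun j => bind01 (τ j))
    simp only [S]; rw [← this, h]
  refine ⟨fun i => decide (S i.val = 1), ?_⟩
  intro j
  show decide (S ((j+1).val) = 1) = xor (decide (S j.val = 1)) (τ j)
  by_cases hj : j = -1
  · rw [hj]
    have h0 : ((-1 : ZMod k) + 1).val = 0 := by simp
    rw [h0]
    have hS0 : S 0 = 0 := by simp [S]
    have hk1 : 1 ≤ k := Nat.one_le_iff_ne_zero.mpr (NeZero.ne k)
    have harg : (((k - 1 : ℕ)) : ZMod k) = (-1 : ZMod k) := by
      have h2 := ZMod.natCast_rightInverse (-1 : ZMod k)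
      rwa [zmod_neg_one_val] at h2
    have hstep := decide_xor_helper (S (k - 1)) (τ (-1))
    rw [← harg, ← hSs (k - 1), show (k - 1) + 1 = k by omega, harg, hSk] at hstep
    rw [zmod_neg_one_val, ← hstep]
    simp [hS0]
  · rw [zmod_val_succ j hj, hSs]
    have harg : ((j.val : ℕ) : ZMod k) = j := ZMod.natCast_rightInverse j
    rw [harg]
    exact decide_xor_helper (S j.val) (τ j)


section Construction
variable (s : ℕ)

/-- embedding of pair-index and side into positions -/
def ee [NeZero s] [NeZero (2*s)] (j : ZMod s) (b : Bool) : ZMod (2*s) :=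
  ((j.val + if b then s else 0 : ℕ) : ZMod (2*s))

def pIdx [NeZero s] [NeZero (2*s)] (i : ZMod (2*s)) : ZMod s := ((i.val % s : ℕ) : ZMod s)

def pSide (i : ZMod (2*s)) : Bool := decide (s ≤ i.val)

variable [NeZero s] [NeZero (2*s)]

lemma val_ee (j : ZMod s) (b : Bool) :
    (ee s j b).val = j.val + if b then s else 0 := by
  have hj : j.val < s := ZMod.val_lt j
  apply ZMod.val_cast_of_lt
  cases b <;> simp <;> omega

lemma pIdx_ee (j : ZMod s) (b : Bool) : pIdx s (ee s j b) = j := by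
  have hj : j.val < s := ZMod.val_lt j
  unfold pIdx
  rw [val_ee]
  have hmod : (j.val + if b then s else 0) % s = j.val := by
    cases b
    · simpa using Nat.mod_eq_of_lt hj
    · simp [Nat.add_mod_right, Nat.mod_eq_of_lt hj]
  rw [hmod]
  exact ZMod.natCast_rightInverse j

lemma pSide_ee (j : ZMod s) (b : Bool) : pSide s (ee s j b) = b := by
  have hj : j.val < s := ZMod.val_lt j
  unfold pSide
  rw [val_ee]
  cases b <;> simp <;> omega

lemma ee_recon (i : ZMod (2*s)) : ee s (pIdx s i) (pSide s i) = i := by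
  have hi : i.val < 2*s := ZMod.val_lt i
  have hs : 0 < s := Nat.pos_of_ne_zero (NeZero.ne s)
  have hv : (pIdx s i).val = i.val % s := ZMod.val_cast_of_lt (Nat.mod_lt _ hs)
  by_cases hc : s ≤ i.val
  · have hside : pSide s i = true := by simp [pSide, hc]
    rw [hside]
    unfold ee
    rw [hv, if_pos rfl]
    have hmod : i.val % s = i.val - s := by
      rw [Nat.mod_eq_sub_mod hc, Nat.mod_eq_of_lt (by omega)]
    rw [hmod, show i.val - s + s = i.val by omega]
    exact ZMod.natCast_rightInverse i
  · have hside : pSide s i = false := by simp [pSide, hc]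
    rw [hside]
    unfold ee
    rw [hv, if_neg (by simp)]
    rw [Nat.add_zero, Nat.mod_eq_of_lt (by omega)]
    exact ZMod.natCast_rightInverse i

lemma ee_inj : Function.Injective (fun p : ZMod s × Bool => ee s p.1 p.2) := by
  intro ⟨j, b⟩ ⟨j', b'⟩ h
  simp only at h
  have := congrArg ZMod.val h
  rw [val_ee, val_ee] at this
  have hj : j.val < s := ZMod.val_lt j
  have hj' : j'.val < s := ZMod.val_lt j'
  have hbb : b = b' := by
    cases b <;> cases b' <;> simp_all <;> omega
  subst hbb
  have hvv : j.val = j'.val := by cases b <;> simp_all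
  have h1 : ((j.val : ℕ) : ZMod s) = j := ZMod.natCast_rightInverse j
  have h2 : ((j'.val : ℕ) : ZMod s) = j' := ZMod.natCast_rightInverse j'
  rw [Prod.mk.injEq]
  refine ⟨by rw [← h1, ← h2, hvv], rfl⟩

end Construction

section Family
variable (s : ℕ) [NeZero s] [NeZero (2*s)]

def mainPhi (w : ZMod (2*s) → Bool) : ZMod (2*s) × Bool → Option Bool :=
  fun x => if x.2 = w x.1 then some (w (x.1 + 1)) else none

def twt (j : ZMod s) : Bool := decide (s % 2 = 1) && decide (j = -1)

def Dval (v : ZMod s → Bool) (j : ZMod s) : Bool := xor (v (j + 1)) (twt s j && v j)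

def patchPhi (v : ZMod s → Bool) : ZMod (2*s) × Bool → Option Bool :=
  fun x => if pSide s x.1 = v (pIdx s x.1) then some (xor x.2 (Dval s v (pIdx s x.1))) else none

lemma mem_pdom_main (w : ZMod (2*s) → Bool) (x : ZMod (2*s) × Bool) :
    x ∈ pdom (mainPhi s w) ↔ x.2 = w x.1 := by
  unfold pdom mainPhi
  simp only [Finset.mem_filter, Finset.mem_univ, true_and]
  split_ifs with h <;> simp [h]

lemma mem_pdom_patch (v : ZMod s → Bool) (x : ZMod (2*s) × Bool) :
    x ∈ pdom (patchPhi s v) ↔ pSide s x.1 = v (pIdx s x.1) := by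
  unfold pdom patchPhi
  simp only [Finset.mem_filter, Finset.mem_univ, true_and]
  split_ifs with h <;> simp [h]

lemma pdom_main_eq (w : ZMod (2*s) → Bool) :
    pdom (mainPhi s w) = Finset.univ.image (fun i : ZMod (2*s) => (i, w i)) := by
  ext x
  rw [mem_pdom_main]
  simp only [Finset.mem_image, Finset.mem_univ, true_and]
  constructor
  · intro h; exact ⟨x.1, by rw [← h]⟩
  · rintro ⟨i, rfl⟩; rfl

lemma pdom_main_card (w : ZMod (2*s) → Bool) :
    (pdom (mainPhi s w)).card = 2*s := by
  rw [pdom_main_eq, Finset.card_image_of_injective _ (fun i i' h => (Prod.mk.injEq _ _ _ _ ▸ h).1),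
    Finset.card_univ, ZMod.card]

lemma pdom_patch_eq (v : ZMod s → Bool) :
    pdom (patchPhi s v) =
      Finset.univ.image (fun p : ZMod s × Bool => (ee s p.1 (v p.1), p.2)) := by
  ext x
  rw [mem_pdom_patch]
  simp only [Finset.mem_image, Finset.mem_univ, true_and]
  constructor
  · intro h
    refine ⟨(pIdx s x.1, x.2), ?_⟩
    have : ee s (pIdx s x.1) (v (pIdx s x.1)) = x.1 := by
      rw [← h]; exact ee_recon s x.1
    rw [this]
  · rintro ⟨⟨j, b⟩, rfl⟩
    simp only
    rw [pIdx_ee, pSide_ee]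

lemma pdom_patch_card (v : ZMod s → Bool) :
    (pdom (patchPhi s v)).card = 2*s := by
  rw [pdom_patch_eq]
  rw [Finset.card_image_of_injective, Finset.card_univ, Fintype.card_prod, ZMod.card,
    Fintype.card_bool]
  · ring
  · intro ⟨j, b⟩ ⟨j', b'⟩ h
    simp only [Prod.mk.injEq] at h
    obtain ⟨h1, h2⟩ := h
    have := ee_inj s (show (fun p : ZMod s × Bool => ee s p.1 p.2) (j, v j) = (fun p : ZMod s × Bool => ee s p.1 p.2) (j', v j') from h1)
    simp only [Prod.mk.injEq] at this
    exact Prod.ext this.1 h2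

end Family

section Unary
variable (s : ℕ) [NeZero s] [NeZero (2*s)]

lemma main_inj (w w' : ZMod (2*s) → Bool) (h : pdom (mainPhi s w) = pdom (mainPhi s w')) :
    w = w' := by
  funext i
  have h1 : ((i, w i) : ZMod (2*s) × Bool) ∈ pdom (mainPhi s w) := by
    rw [mem_pdom_main]
  rw [h, mem_pdom_main] at h1
  exact h1

lemma patch_inj (v v' : ZMod s → Bool) (h : pdom (patchPhi s v) = pdom (patchPhi s v')) :
    v = v' := by
  funext j
  have h1 : ((ee s j (v j), false) : ZMod (2*s) × Bool) ∈ pdom (patchPhi s v) := by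
    rw [mem_pdom_patch]
    simp only [pIdx_ee, pSide_ee]
  rw [h, mem_pdom_patch] at h1
  simp only [pIdx_ee, pSide_ee] at h1
  exact h1

lemma main_ne_patch (w : ZMod (2*s) → Bool) (v : ZMod s → Bool) :
    pdom (mainPhi s w) ≠ pdom (patchPhi s v) := by
  intro h
  have hf : ((ee s 0 (v 0), false) : ZMod (2*s) × Bool) ∈ pdom (patchPhi s v) := by
    rw [mem_pdom_patch]; simp only [pIdx_ee, pSide_ee]
  have ht : ((ee s 0 (v 0), true) : ZMod (2*s) × Bool) ∈ pdom (patchPhi s v) := by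
    rw [mem_pdom_patch]; simp only [pIdx_ee, pSide_ee]
  rw [← h, mem_pdom_main] at hf ht
  simp only at hf ht
  rw [← hf] at ht
  exact Bool.noConfusion ht

end Unary


section Coverage
variable (s : ℕ) [NeZero s] [NeZero (2*s)]

lemma bool_ne_eq_not : ∀ a b : Bool, a ≠ b → a = !b := by decide
lemma bind01_same : ∀ a : Bool, bind01 a + bind01 a = 0 := by decide
lemma bind01_ne : ∀ a b : Bool, a ≠ b → bind01 a + bind01 b = 1 := by decide
lemma bool_not_ne_iff : ∀ a b : Bool, (!a) ≠ b → a = b := by decide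
lemma bool_xor_shift : ∀ a b c : Bool, a = xor b c → b = xor a c := by decide
lemma zmod2_cases : ∀ x : ZMod 2, x = 0 ∨ x = 1 := by decide

lemma ext_main (f : ZMod (2*s) × Bool → Bool) (w : ZMod (2*s) → Bool)
    (h : ∀ i, f (i, w i) = w (i + 1)) : PExtends f (mainPhi s w) := by
  rintro ⟨i, b⟩ c heq
  unfold mainPhi at heq
  by_cases hcond : b = w i
  · rw [if_pos hcond] at heq
    have := Option.some.inj heq
    rw [hcond, ← this]
    exact h i
  · rw [if_neg hcond] at heq; exact absurd heq (by simp)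

lemma ee_bijective : Function.Bijective (fun p : ZMod s × Bool => ee s p.1 p.2) := by
  rw [Fintype.bijective_iff_injective_and_card]
  refine ⟨ee_inj s, ?_⟩
  rw [Fintype.card_prod, ZMod.card, ZMod.card, Fintype.card_bool]; ring

theorem coverage (f : ZMod (2*s) × Bool → Bool) :
    (∃ w, PExtends f (mainPhi s w)) ∨ (∃ v, PExtends f (patchPhi s v)) := by
  by_cases hconst : ∃ i₀, f (i₀, true) = f (i₀, false)
  · obtain ⟨i₀, hi₀⟩ := hconst
    obtain ⟨w, hw⟩ := chainA (fun i x => f (i, x)) i₀ hi₀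
    exact Or.inl ⟨w, ext_main s f w (fun i => (hw i).symm)⟩
  · push_neg at hconst
    set t : ZMod (2*s) → Bool := fun i => f (i, false) with ht
    have hxor : ∀ i x, f (i, x) = xor x (t i) := by
      intro i x
      cases x
      · simp [ht]
      · simp only [Bool.true_xor]
        exact bool_ne_eq_not _ _ (hconst i)
    rcases zmod2_cases (∑ i, bind01 (t i)) with hP | hP
    · obtain ⟨w, hw⟩ := chainB t hP
      refine Or.inl ⟨w, ext_main s f w (fun i => ?_)⟩
      rw [hxor i (w i), ← hw i]
    · -- patcher case
      set h : ZMod s → Bool → Bool := fun j b => t (ee s j b) with hh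
      set H : ZMod s → Bool → Bool := fun j x => xor (h j x) (twt s j && x) with hH
      have hj₀ : ∃ j₀, H j₀ true = H j₀ false := by
        by_contra hall
        push_neg at hall
        have hsplit : (∑ i, bind01 (t i)) =
            ∑ j : ZMod s, (bind01 (t (ee s j true)) + bind01 (t (ee s j false))) := by
          rw [← Fintype.sum_bijective _ (ee_bijective s)
            (fun p : ZMod s × Bool => bind01 (t (ee s p.1 p.2))) (fun i => bind01 (t i))
            (fun p => rfl)]
          rw [Fintype.sum_prod_type]
          exact Finset.sum_congr rfl (fun j _ => Fintype.sum_bool _)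
        have hcontrib : ∀ j : ZMod s,
            bind01 (t (ee s j true)) + bind01 (t (ee s j false)) =
              (if twt s j then 0 else 1) := by
          intro j
          have hne := hall j
          by_cases htw : twt s j = true
          · rw [if_pos htw]
            rw [hH] at hne
            simp only [htw, Bool.true_and, Bool.and_false, Bool.xor_false, Bool.xor_true] at hne
            have : h j true = h j false := bool_not_ne_iff _ _ hne
            rw [hh] at this
            simp only at this
            rw [this]
            exact bind01_same _
          · have htw' : twt s j = false := by revert htw; cases twt s j <;> simp
            rw [if_neg (by simp [htw'])]
            rw [hH] at hne
            simp only [htw', Bool.false_and, Bool.xor_false] at hne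
            rw [hh] at hne
            simp only at hne
            exact bind01_ne _ _ hne
        rw [hsplit] at hP
        rw [Finset.sum_congr rfl (fun j _ => hcontrib j)] at hP
        by_cases hpar : s % 2 = 1
        · have htweq : ∀ j : ZMod s, twt s j = decide (j = -1) := by
            intro j; unfold twt; rw [decide_eq_true hpar, Bool.true_and]
          have hsum : (∑ j : ZMod s, ((if twt s j then 0 else 1) : ZMod 2)) =
              ∑ j ∈ (Finset.univ \ {(-1 : ZMod s)}), ((1 : ZMod 2)) := by
            rw [Finset.sum_eq_sum_sdiff_singleton_add (Finset.mem_univ (-1 : ZMod s))]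
            rw [htweq, decide_eq_true rfl, if_pos rfl, add_zero]
            refine Finset.sum_congr rfl (fun j hj => ?_)
            rw [Finset.mem_sdiff, Finset.mem_singleton] at hj
            rw [htweq, decide_eq_false hj.2, if_neg (by simp)]
          rw [hsum, Finset.sum_const, Finset.card_sdiff_of_subset (by simp), Finset.card_univ,
            ZMod.card, Finset.card_singleton, nsmul_eq_mul, mul_one] at hP
          have : ((s - 1 : ℕ) : ZMod 2) = 0 := by
            rw [ZMod.natCast_eq_zero_iff]; omega
          rw [this] at hP
          exact absurd hP (by decide)
        · have htweq : ∀ j : ZMod s, twt s j = false := by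
            intro j; unfold twt
            rw [decide_eq_false hpar, Bool.false_and]
          rw [Finset.sum_congr rfl (fun j _ => by rw [htweq, if_neg (by simp)])] at hP
          rw [Finset.sum_const, Finset.card_univ, ZMod.card, nsmul_eq_mul, mul_one] at hP
          have : ((s : ℕ) : ZMod 2) = 0 := by
            rw [ZMod.natCast_eq_zero_iff]; omega
          rw [this] at hP
          exact absurd hP (by decide)
      obtain ⟨j₀, hj₀c⟩ := hj₀
      obtain ⟨v, hv⟩ := chainA H j₀ hj₀c
      have hkey : ∀ j, t (ee s j (v j)) = Dval s v j := by
        intro j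
        have := hv j
        rw [hH] at this
        simp only at this
        have h2 := bool_xor_shift _ _ _ this
        rw [hh] at h2
        simpa [Dval] using h2
      refine Or.inr ⟨v, ?_⟩
      rintro ⟨i, b⟩ c heq
      unfold patchPhi at heq
      by_cases hcond : pSide s i = v (pIdx s i)
      · rw [if_pos hcond] at heq
        have hc := Option.some.inj heq
        have hi : ee s (pIdx s i) (v (pIdx s i)) = i := by
          rw [← hcond]; exact ee_recon s i
        rw [← hc, hxor i b, ← hkey (pIdx s i), hi]
      · rw [if_neg hcond] at heq; exact absurd heq (by simp)

end Coverage

section Assemble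
variable (s : ℕ) [NeZero s] [NeZero (2*s)]

def FF : Finset ((ZMod (2*s) × Bool) → Option Bool) :=
  (Finset.univ.image (mainPhi s)) ∪ (Finset.univ.image (patchPhi s))

lemma mainPhi_inj : Function.Injective (mainPhi s) := by
  intro w w' h
  exact main_inj s w w' (by rw [h])

lemma patchPhi_inj : Function.Injective (patchPhi s) := by
  intro v v' h
  exact patch_inj s v v' (by rw [h])

lemma FF_card : (FF s).card = 2^(2*s) + 2^s := by
  unfold FF
  rw [Finset.card_union_of_disjoint]
  · rw [Finset.card_image_of_injective _ (mainPhi_inj s),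
      Finset.card_image_of_injective _ (patchPhi_inj s),
      Finset.card_univ, Finset.card_univ, Fintype.card_fun, Fintype.card_fun,
      ZMod.card, ZMod.card, Fintype.card_bool]
  · rw [Finset.disjoint_left]
    rintro φ hφ hψ
    rw [Finset.mem_image] at hφ hψ
    obtain ⟨w, _, rfl⟩ := hφ
    obtain ⟨v, _, hv⟩ := hψ
    exact main_ne_patch s w v (by rw [← hv])

lemma FF_uniform : ∀ φ ∈ FF s, (pdom φ).card = 2*s := by
  intro φ hφ
  rw [FF, Finset.mem_union, Finset.mem_image, Finset.mem_image] at hφ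
  rcases hφ with ⟨w, _, rfl⟩ | ⟨v, _, rfl⟩
  · exact pdom_main_card s w
  · exact pdom_patch_card s v

lemma FF_unary : ∀ φ ∈ FF s, ∀ ψ ∈ FF s, pdom φ = pdom ψ → φ = ψ := by
  intro φ hφ ψ hψ hd
  rw [FF, Finset.mem_union, Finset.mem_image, Finset.mem_image] at hφ hψ
  rcases hφ with ⟨w, _, rfl⟩ | ⟨v, _, rfl⟩ <;> rcases hψ with ⟨w', _, rfl⟩ | ⟨v', _, rfl⟩
  · rw [main_inj s w w' hd]
  · exact absurd hd (main_ne_patch s w v')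
  · exact absurd hd.symm (main_ne_patch s w' v)
  · rw [patch_inj s v v' hd]

lemma FF_cover : ∀ f : (ZMod (2*s) × Bool) → Bool, ∃ φ ∈ FF s, PExtends f φ := by
  intro f
  rcases coverage s f with ⟨w, hw⟩ | ⟨v, hv⟩
  · exact ⟨mainPhi s w, by rw [FF, Finset.mem_union]; exact Or.inl (Finset.mem_image_of_mem _ (Finset.mem_univ _)), hw⟩
  · exact ⟨patchPhi s v, by rw [FF, Finset.mem_union]; exact Or.inr (Finset.mem_image_of_mem _ (Finset.mem_univ _)), hv⟩

end Assemble

section Transport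
variable {X : Type*} [Fintype X] [DecidableEq X] {n : ℕ}

lemma pdom_comp (e : X ≃ Fin n) (φ : X → Option Bool) :
    pdom (φ ∘ e.symm) = (pdom φ).image e := by
  ext x
  unfold pdom
  simp only [Finset.mem_filter, Finset.mem_univ, true_and, Finset.mem_image, Function.comp_apply]
  constructor
  · intro h
    exact ⟨e.symm x, h, e.apply_symm_apply x⟩
  · rintro ⟨y, hy, rfl⟩
    rwa [e.symm_apply_apply]

end Transport

theorem aux_main_result (r : ℕ) (hr : 2 ≤ r) (hreven : Even r) :
    ∃ (n : ℕ) (F : Finset (Fin n → Option Bool)),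
      (∀ φ ∈ F, (pdom φ).card = r) ∧
      (∀ φ ∈ F, ∀ ψ ∈ F, pdom φ = pdom ψ → φ = ψ) ∧
      F.card = 2 ^ r + 2 ^ (r / 2) ∧
      (∀ f : Fin n → Bool, ∃ φ ∈ F, PExtends f φ) := by
  obtain ⟨c, hc⟩ := hreven
  have hs0 : 0 < c := by omega
  haveI : NeZero c := ⟨by omega⟩
  haveI : NeZero (2*c) := ⟨by omega⟩
  have hrc : r = 2*c := by omega
  have hrc2 : r / 2 = c := by omega
  have hcard : Fintype.card (ZMod (2*c) × Bool) = 4*c := by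
    rw [Fintype.card_prod, ZMod.card, Fintype.card_bool]; ring
  let E : (ZMod (2*c) × Bool) ≃ Fin (4*c) := Fintype.equivFinOfCardEq hcard
  have hcompinj : Function.Injective (fun (φ : (ZMod (2*c) × Bool) → Option Bool) => φ ∘ E.symm) := by
    intro φ ψ h
    funext x
    have := congrFun h (E x)
    simpa using this
  refine ⟨4*c, (FF c).image (fun φ => φ ∘ E.symm), ?_, ?_, ?_, ?_⟩
  · intro φ hφ
    rw [Finset.mem_image] at hφ
    obtain ⟨ψ, hψ, rfl⟩ := hφ
    rw [pdom_comp, Finset.card_image_of_injective _ E.injective, FF_uniform c ψ hψ, hrc]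
  · intro φ hφ ψ hψ hd
    rw [Finset.mem_image] at hφ hψ
    obtain ⟨φ', hφ', rfl⟩ := hφ
    obtain ⟨ψ', hψ', rfl⟩ := hψ
    rw [pdom_comp, pdom_comp] at hd
    have : pdom φ' = pdom ψ' := by
      have himg := Finset.image_injective E.injective hd
      exact himg
    rw [FF_unary c φ' hφ' ψ' hψ' this]
  · rw [Finset.card_image_of_injective _ hcompinj, FF_card, hrc, Nat.mul_div_cancel_left c (by norm_num)]
  · intro f
    obtain ⟨φ, hφ, hext⟩ := FF_cover c (f ∘ E)
    refine ⟨φ ∘ E.symm, Finset.mem_image_of_mem _ hφ, ?_⟩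
    intro x b hx
    have := hext (E.symm x) b hx
    simpa using this

theorem stmt_18 (r : ℕ) (hr : 2 ≤ r) (hreven : Even r) :
    ∃ (n : ℕ) (F : Finset (Fin n → Option Bool)),
      (∀ φ ∈ F, (pdom φ).card = r) ∧
      (∀ φ ∈ F, ∀ ψ ∈ F, pdom φ = pdom ψ → φ = ψ) ∧
      F.card = 2 ^ r + 2 ^ (r / 2) ∧
      (∀ f : Fin n → Bool, ∃ φ ∈ F, PExtends f φ) := aux_main_result r hr hreven
end
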